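/- arXiv:2202.06903 — 4 statements merged into one kernel-verified Lean document; each statement's English description precedes it below -/
import Mathlib

section
/- Let C be a symmetric n×n rational matrix and H an n×k rational matrix. Let X ∈ ℤⁿ range over a finite box [1,N]ⁿ. Then the number of pairs (x,y) ∈ ([1,N]ⁿ)² with xᵀCx = yᵀCy and xᵀH = yᵀH is at most a constant (depending only on C, H, n, k) times the number of pairs (u,v) ∈ ([-2N,2N]ⁿ)² with uᵀCv = 0 and uᵀH = 0. -/
/-! The substitution `(x, y) ↦ (x - y, x + y)` is injective, maps the box `[1, N]ⁿ` into
`[-2N, 2N]ⁿ`, and for symmetric `C` turns `xᵀCx - yᵀCy` and `xᵀH - yᵀH` into `uᵀCv` and `uᵀH`.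
So it embeds the first solution set into the second, and the bound holds with constant `1`. -/

open Matrix

theorem Matrix.IsSymm.sub_dotProduct_mulVec_add {ι R : Type*} [Fintype ι] [CommRing R]
    {C : Matrix ι ι R} (hC : C.IsSymm) (x y : ι → R) :
    (x - y) ⬝ᵥ C *ᵥ (x + y) = x ⬝ᵥ C *ᵥ x - y ⬝ᵥ C *ᵥ y := by
  have hcomm : y ⬝ᵥ C *ᵥ x = x ⬝ᵥ C *ᵥ y := by
    rw [dotProduct_mulVec, ← mulVec_transpose, hC.eq, dotProduct_comm]
  rw [mulVec_add, sub_dotProduct, dotProduct_add, dotProduct_add, hcomm]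
  ring

theorem injective_sub_add {G : Type*} [AddCommGroup G] [IsAddTorsionFree G] :
    Function.Injective fun p : G × G => (p.1 - p.2, p.1 + p.2) := by
  rintro ⟨x, y⟩ ⟨x', y'⟩ h
  obtain ⟨hsub, hadd⟩ := Prod.mk.inj h
  have two_nsmul_injective := IsAddTorsionFree.nsmul_right_injective (M := G) two_ne_zero
  refine Prod.ext (two_nsmul_injective ?_) (two_nsmul_injective ?_)
  · calc 2 • x = (x - y) + (x + y) := by abel
      _ = (x' - y') + (x' + y') := by rw [hsub, hadd]
      _ = 2 • x' := by abel
  · calc 2 • y = (x + y) - (x - y) := by abel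
      _ = (x' + y') - (x' - y') := by rw [hsub, hadd]
      _ = 2 • y' := by abel

/-- Zhao's Lemma 5.7: the number of pairs (x,y) in the box [1,N]^n with
xᵀCx = yᵀCy and xᵀH = yᵀH is bounded by a constant (depending only on C, H)
times the number of pairs (u,v) in [-2N,2N]^n with uᵀCv = 0 and uᵀH = 0. -/
theorem stmt_0 (n k : ℕ) (C : Matrix (Fin n) (Fin n) ℚ) (hC : C.IsSymm)
    (H : Matrix (Fin n) (Fin k) ℚ) :
    ∃ c : ℝ, 0 < c ∧ ∀ N : ℤ,
      (({p : (Fin n → ℤ) × (Fin n → ℤ) |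
          (∀ i, 1 ≤ p.1 i ∧ p.1 i ≤ N) ∧ (∀ i, 1 ≤ p.2 i ∧ p.2 i ≤ N) ∧
          dotProduct (fun i => (p.1 i : ℚ)) (C.mulVec (fun i => (p.1 i : ℚ)))
            = dotProduct (fun i => (p.2 i : ℚ)) (C.mulVec (fun i => (p.2 i : ℚ))) ∧
          vecMul (fun i => (p.1 i : ℚ)) H = vecMul (fun i => (p.2 i : ℚ)) H}).ncard : ℝ)
      ≤ c *
      (({p : (Fin n → ℤ) × (Fin n → ℤ) |
          (∀ i, -(2*N) ≤ p.1 i ∧ p.1 i ≤ 2*N) ∧ (∀ i, -(2*N) ≤ p.2 i ∧ p.2 i ≤ 2*N) ∧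
          dotProduct (fun i => (p.1 i : ℚ)) (C.mulVec (fun i => (p.2 i : ℚ))) = 0 ∧
          vecMul (fun i => (p.1 i : ℚ)) H = 0}).ncard : ℝ) := by
  refine ⟨1, one_pos, fun N => ?_⟩
  rw [one_mul, Nat.cast_le]
  refine Set.ncard_le_ncard_of_injOn _ ?_ injective_sub_add.injOn ?_
  · rintro ⟨x, y⟩ ⟨hx, hy, hQ, hL⟩
    have cast_sub : (fun i => ((x - y) i : ℚ)) = (fun i => (x i : ℚ)) - fun i => (y i : ℚ) := by
      ext; simp
    have cast_add : (fun i => ((x + y) i : ℚ)) = (fun i => (x i : ℚ)) + fun i => (y i : ℚ) := by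
      ext; simp
    refine ⟨fun i => ?_, fun i => ?_, ?_, ?_⟩
    · have := hx i; have := hy i; dsimp only [Pi.sub_apply] at *; omega
    · have := hx i; have := hy i; dsimp only [Pi.add_apply] at *; omega
    · rw [cast_sub, cast_add, hC.sub_dotProduct_mulVec_add, hQ, sub_self]
    · rw [cast_sub, sub_vecMul, hL, sub_self]
  · have box_finite := Set.Finite.pi (t := fun _ : Fin n => Set.Icc (-(2 * N)) (2 * N))
      fun _ => Set.finite_Icc _ _
    refine (box_finite.prod box_finite).subset ?_
    rintro ⟨u, v⟩ ⟨hu, hv, -, -⟩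
    exact ⟨fun i _ => hu i, fun i _ => hv i⟩
end

section
/- Let C be an n×k rational matrix with rank(C) ≥ 2. Then the number of pairs (x,y) with x ∈ ℤⁿ, y ∈ ℤᵏ, |xᵢ| ≤ X, |yⱼ| ≤ X for all i,j, and xᵀCy = 0, is O(X^{k+n−2} log X), with implied constant depending only on C. -/
open Finset Matrix


lemma harm_bound (R : ℕ) : ∑ d ∈ Icc 1 R, (R : ℝ)/d ≤ R * (1 + Real.log R) := by
  have h1 : ∑ d ∈ Icc 1 R, (R : ℝ)/d = R * ∑ d ∈ Icc 1 R, ((d:ℝ))⁻¹ := by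
    rw [Finset.mul_sum]; apply Finset.sum_congr rfl; intro d _; rw [div_eq_mul_inv]
  have h2 : ∑ d ∈ Icc 1 R, ((d:ℝ))⁻¹ = ((harmonic R : ℚ) : ℝ) := by
    rw [harmonic_eq_sum_Icc]; push_cast; ring
  rw [h1, h2]
  have := harmonic_le_one_add_log R
  have hR : (0:ℝ) ≤ R := Nat.cast_nonneg R
  nlinarith [this]

lemma divisor_bound (R : ℕ) :
    (∑ a ∈ Icc 1 R, (((Icc 1 R).filter (· ∣ a)).card : ℝ)) ≤ R * (1 + Real.log R) := by
  have hswap : ∑ a ∈ Icc 1 R, ((Icc 1 R).filter (· ∣ a)).card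
      = ∑ d ∈ Icc 1 R, ((Icc 1 R).filter (d ∣ ·)).card := by
    simp only [Finset.card_filter]
    try exact Finset.sum_comm
  have hcast : (∑ a ∈ Icc 1 R, (((Icc 1 R).filter (· ∣ a)).card : ℝ))
      = ((∑ a ∈ Icc 1 R, ((Icc 1 R).filter (· ∣ a)).card : ℕ) : ℝ) := by push_cast; rfl
  rw [hcast, hswap]
  push_cast
  refine le_trans (Finset.sum_le_sum ?_) (harm_bound R)
  intro d hd
  have : (Icc 1 R).filter (d ∣ ·) = (Ioc 0 R).filter (d ∣ ·) := by
    ext x; simp only [mem_filter, mem_Icc, mem_Ioc]; omega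
  rw [this, Nat.Ioc_filter_dvd_card_eq_div]
  exact Nat.cast_div_le

lemma gcd_row_bound (R a : ℕ) (ha : a ∈ Icc 1 R) :
    ∑ b ∈ Icc 1 a, (Nat.gcd a b : ℝ) / a ≤ (((Icc 1 R).filter (· ∣ a)).card : ℝ) := by
  simp only [mem_Icc] at ha
  have ha1 : 1 ≤ a := ha.1
  have haR : (0:ℝ) < a := by positivity
  have step1 : ∀ b ∈ Icc 1 a, (Nat.gcd a b : ℝ)/a
      ≤ ∑ d ∈ (Icc 1 a).filter (fun d => d ∣ a ∧ d ∣ b), (d:ℝ)/a := by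
    intro b hb
    simp only [mem_Icc] at hb
    have hg : Nat.gcd a b ∈ (Icc 1 a).filter (fun d => d ∣ a ∧ d ∣ b) := by
      simp only [mem_filter, mem_Icc]
      refine ⟨⟨Nat.one_le_iff_ne_zero.2 (Nat.gcd_ne_zero_left (by omega)),
        Nat.le_of_dvd (by omega) (Nat.gcd_dvd_left a b)⟩, Nat.gcd_dvd_left a b, Nat.gcd_dvd_right a b⟩
    have hnn : ∀ d ∈ (Icc 1 a).filter (fun d => d ∣ a ∧ d ∣ b), (0:ℝ) ≤ (d:ℝ)/(a:ℝ) :=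
      fun d _ => div_nonneg (Nat.cast_nonneg _) (Nat.cast_nonneg _)
    exact Finset.single_le_sum hnn hg
  refine le_trans (Finset.sum_le_sum step1) ?_
  have step2 : ∑ b ∈ Icc 1 a, ∑ d ∈ (Icc 1 a).filter (fun d => d ∣ a ∧ d ∣ b), (d:ℝ)/a
      = ∑ d ∈ Icc 1 a, ∑ b ∈ Icc 1 a, if d ∣ a ∧ d ∣ b then (d:ℝ)/a else 0 := by
    rw [Finset.sum_comm]
    apply Finset.sum_congr rfl; intro b _
    rw [Finset.sum_filter]
  rw [step2]
  have step3 : ∀ d ∈ Icc 1 a, (∑ b ∈ Icc 1 a, if d ∣ a ∧ d ∣ b then (d:ℝ)/a else 0)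
      ≤ if d ∣ a then 1 else 0 := by
    intro d hd
    simp only [mem_Icc] at hd
    by_cases h : d ∣ a
    · simp only [h, true_and, if_true]
      have : (∑ b ∈ Icc 1 a, if d ∣ b then (d:ℝ)/a else 0)
          = (((Icc 1 a).filter (d ∣ ·)).card : ℝ) * ((d:ℝ)/a) := by
        rw [← Finset.sum_filter]
        rw [Finset.sum_const, nsmul_eq_mul]
      rw [this]
      have hcard : ((Icc 1 a).filter (d ∣ ·)).card = a / d := by
        have : (Icc 1 a) = Ioc 0 a := (Finset.Icc_add_one_left_eq_Ioc 0 a)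
        rw [this, Nat.Ioc_filter_dvd_card_eq_div]
      rw [hcard]
      have h1 : ((a / d : ℕ) : ℝ) ≤ (a:ℝ)/d := Nat.cast_div_le
      have hd0 : (0:ℝ) < d := by exact_mod_cast hd.1
      calc ((a / d : ℕ) : ℝ) * ((d:ℝ)/a) ≤ ((a:ℝ)/d) * ((d:ℝ)/a) := by
            apply mul_le_mul_of_nonneg_right h1; positivity
        _ = 1 := by field_simp
    · simp only [h, false_and, if_false]
      simp
  refine le_trans (Finset.sum_le_sum step3) ?_
  rw [← Finset.sum_filter]
  simp only [Finset.sum_const, nsmul_eq_mul, mul_one]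
  have : (Icc 1 a).filter (· ∣ a) ⊆ (Icc 1 R).filter (· ∣ a) := by
    apply Finset.filter_subset_filter
    apply Finset.Icc_subset_Icc le_rfl ha.2
  exact_mod_cast Finset.card_le_card this

lemma gcd_square_bound (R : ℕ) :
    ∑ a ∈ Icc 1 R, ∑ b ∈ Icc 1 R, (Nat.gcd a b : ℝ) / max a b
      ≤ 2 * (R * (1 + Real.log R)) := by
  have tri : ∑ a ∈ Icc 1 R, ∑ b ∈ Icc 1 R, (if b ≤ a then (Nat.gcd a b : ℝ) / max a b else 0)
      ≤ R * (1 + Real.log R) := by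
    refine le_trans (Finset.sum_le_sum (fun a ha => ?_)) (divisor_bound R)
    rw [← Finset.sum_filter]
    have hfa : (Icc 1 R).filter (· ≤ a) = Icc 1 a := by
      simp only [mem_Icc] at ha
      ext b; simp only [mem_filter, mem_Icc]; omega
    rw [hfa]
    refine le_trans (le_of_eq ?_) (gcd_row_bound R a ha)
    apply Finset.sum_congr rfl
    intro b hb
    simp only [mem_Icc] at hb
    congr 1
    simp [Nat.max_eq_left hb.2]
  have split : ∀ a ∈ Icc 1 R, ∀ b ∈ Icc 1 R, (Nat.gcd a b : ℝ) / max a b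
      ≤ (if b ≤ a then (Nat.gcd a b : ℝ) / max a b else 0)
        + (if a ≤ b then (Nat.gcd a b : ℝ) / max a b else 0) := by
    intro a _ b _
    have hnn : (0:ℝ) ≤ (Nat.gcd a b : ℝ) / max a b := by positivity
    rcases le_total b a with h | h
    · simp only [h, if_true]
      rcases le_or_gt a b with h2 | h2
      · simp [h2]; positivity
      · simp [not_le.2 h2]
    · simp only [h, if_true]
      rcases le_or_gt b a with h2 | h2
      · simp [h2]; positivity
      · simp [not_le.2 h2]
  calc ∑ a ∈ Icc 1 R, ∑ b ∈ Icc 1 R, (Nat.gcd a b : ℝ) / max a b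
      ≤ ∑ a ∈ Icc 1 R, ∑ b ∈ Icc 1 R,
          ((if b ≤ a then (Nat.gcd a b : ℝ) / max a b else 0)
            + (if a ≤ b then (Nat.gcd a b : ℝ) / max a b else 0)) := by
        refine Finset.sum_le_sum (fun a ha => Finset.sum_le_sum (fun b hb => split a ha b hb))
    _ = (∑ a ∈ Icc 1 R, ∑ b ∈ Icc 1 R, (if b ≤ a then (Nat.gcd a b : ℝ) / max a b else 0))
        + ∑ a ∈ Icc 1 R, ∑ b ∈ Icc 1 R, (if a ≤ b then (Nat.gcd a b : ℝ) / max a b else 0) := by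
        rw [← Finset.sum_add_distrib]
        apply Finset.sum_congr rfl
        intro a _
        rw [← Finset.sum_add_distrib]
    _ ≤ R * (1 + Real.log R) + R * (1 + Real.log R) := by
        refine add_le_add tri ?_
        rw [Finset.sum_comm]
        refine le_trans (le_of_eq ?_) tri
        apply Finset.sum_congr rfl; intro a _; apply Finset.sum_congr rfl; intro b _
        rw [Nat.gcd_comm, Nat.max_comm]
    _ = 2 * (R * (1 + Real.log R)) := by ring

lemma Icc_int_card (N : ℕ) : (Icc (-(N:ℤ)) N).card = 2*N+1 := by
  rw [Int.card_Icc]; omega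

lemma pi_card_two (m N : ℕ) (i₁ i₂ : Fin m) (h : i₁ ≠ i₂) :
    (Fintype.piFinset (fun i : Fin m => if i = i₁ ∨ i = i₂ then ({0} : Finset ℤ)
      else Icc (-(N:ℤ)) N)).card = (2*N+1)^(m-2) := by
  rw [Fintype.card_piFinset]
  have h2 : i₂ ∈ (Finset.univ : Finset (Fin m)).erase i₁ :=
    Finset.mem_erase.2 ⟨h.symm, Finset.mem_univ _⟩
  rw [← Finset.mul_prod_erase _ _ (Finset.mem_univ i₁), ← Finset.mul_prod_erase _ _ h2]
  have e1 : (if i₁ = i₁ ∨ i₁ = i₂ then ({0} : Finset ℤ) else Icc (-(N:ℤ)) N).card = 1 := by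
    simp
  have e2 : (if i₂ = i₁ ∨ i₂ = i₂ then ({0} : Finset ℤ) else Icc (-(N:ℤ)) N).card = 1 := by
    simp
  rw [e1, e2]
  have e3 : ∀ i ∈ ((Finset.univ : Finset (Fin m)).erase i₁).erase i₂,
      (if i = i₁ ∨ i = i₂ then ({0} : Finset ℤ) else Icc (-(N:ℤ)) N).card = 2*N+1 := by
    intro i hi
    simp only [Finset.mem_erase] at hi
    rw [if_neg (by tauto), Icc_int_card]
  rw [Finset.prod_congr rfl e3, Finset.prod_const]
  have hcc : (((Finset.univ : Finset (Fin m)).erase i₁).erase i₂).card = m - 2 := by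
    rw [Finset.card_erase_of_mem h2, Finset.card_erase_of_mem (Finset.mem_univ i₁)]
    simp only [Finset.card_univ, Fintype.card_fin]
    omega
  rw [hcc]; ring

lemma pi_card_one (m N : ℕ) (i₀ : Fin m) :
    (Fintype.piFinset (fun i : Fin m => if i = i₀ then ({0} : Finset ℤ)
      else Icc (-(N:ℤ)) N)).card = (2*N+1)^(m-1) := by
  rw [Fintype.card_piFinset]
  rw [← Finset.mul_prod_erase _ _ (Finset.mem_univ i₀)]
  have e1 : (if i₀ = i₀ then ({0} : Finset ℤ) else Icc (-(N:ℤ)) N).card = 1 := by simp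
  rw [e1]
  have e3 : ∀ i ∈ (Finset.univ : Finset (Fin m)).erase i₀,
      (if i = i₀ then ({0} : Finset ℤ) else Icc (-(N:ℤ)) N).card = 2*N+1 := by
    intro i hi
    simp only [Finset.mem_erase] at hi
    rw [if_neg hi.1, Icc_int_card]
  rw [Finset.prod_congr rfl e3, Finset.prod_const]
  rw [Finset.card_erase_of_mem (Finset.mem_univ i₀)]
  simp

lemma lin1_card (m N : ℕ) (c : Fin m → ℤ) (i₀ : Fin m) (h : c i₀ ≠ 0) (E : ℤ) :
    ((Fintype.piFinset (fun _ : Fin m => Icc (-(N:ℤ)) N)).filter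
      (fun x => ∑ i, c i * x i = E)).card ≤ (2*N+1)^(m-1) := by
  rw [← pi_card_one m N i₀]
  apply Finset.card_le_card_of_injOn (fun x => Function.update x i₀ 0)
  · intro x hx
    simp only [Finset.mem_coe, Finset.mem_filter, Fintype.mem_piFinset] at hx
    rw [Finset.mem_coe, Fintype.mem_piFinset]
    intro i
    beta_reduce
    by_cases hi : i = i₀
    · subst hi; simp
    · rw [if_neg hi, Function.update_of_ne hi]
      exact hx.1 i
  · intro x hx x' hx' heq
    simp only [Finset.coe_filter, Set.mem_setOf_eq] at hx hx'
    dsimp only at heq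
    have hoff : ∀ i, i ≠ i₀ → x i = x' i := by
      intro i hi
      have h' := congrFun heq i
      rwa [Function.update_of_ne hi, Function.update_of_ne hi] at h'
    have hsum : ∑ i, (c i * x i - c i * x' i) = 0 := by
      rw [Finset.sum_sub_distrib, hx.2, hx'.2, sub_self]
    have hsingle : ∑ i, (c i * x i - c i * x' i) = c i₀ * x i₀ - c i₀ * x' i₀ := by
      apply Finset.sum_eq_single i₀
      · intro b _ hb
        rw [hoff b hb, sub_self]
      · intro hb; exact absurd (Finset.mem_univ i₀) hb
    rw [hsingle] at hsum
    have hmain : x i₀ = x' i₀ := mul_left_cancel₀ h (sub_eq_zero.1 hsum)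
    funext i
    by_cases hi : i = i₀
    · rw [hi]; exact hmain
    · exact hoff i hi

lemma lin2_card (m N : ℕ) (c d : Fin m → ℤ) (i₁ i₂ : Fin m) (hne : i₁ ≠ i₂)
    (hdet : c i₁ * d i₂ - c i₂ * d i₁ ≠ 0) (E₁ E₂ : ℤ) :
    ((Fintype.piFinset (fun _ : Fin m => Icc (-(N:ℤ)) N)).filter
      (fun x => (∑ i, c i * x i) = E₁ ∧ (∑ i, d i * x i) = E₂)).card ≤ (2*N+1)^(m-2) := by
  rw [← pi_card_two m N i₁ i₂ hne]
  apply Finset.card_le_card_of_injOn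
    (fun x => Function.update (Function.update x i₁ 0) i₂ 0)
  · intro x hx
    simp only [Finset.mem_coe, Finset.mem_filter, Fintype.mem_piFinset] at hx
    rw [Finset.mem_coe, Fintype.mem_piFinset]
    intro i
    beta_reduce
    by_cases hi2 : i = i₂
    · subst hi2; simp
    · by_cases hi1 : i = i₁
      · subst hi1
        rw [if_pos (Or.inl rfl), Function.update_of_ne hne, Function.update_self]
        simp
      · rw [if_neg (by tauto), Function.update_of_ne hi2, Function.update_of_ne hi1]
        exact hx.1 i
  · intro x hx x' hx' heq
    simp only [Finset.coe_filter, Set.mem_setOf_eq] at hx hx'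
    dsimp only at heq
    have hoff : ∀ i, i ≠ i₁ → i ≠ i₂ → x i = x' i := by
      intro i h1 h2
      have h' := congrFun heq i
      rwa [Function.update_of_ne h2, Function.update_of_ne h1,
        Function.update_of_ne h2, Function.update_of_ne h1] at h'
    have hdiff : ∀ (e : Fin m → ℤ) (F : ℤ), (∑ i, e i * x i) = F → (∑ i, e i * x' i) = F →
        e i₁ * (x i₁ - x' i₁) + e i₂ * (x i₂ - x' i₂) = 0 := by
      intro e F h1 h2
      have hsum : ∑ i, (e i * x i - e i * x' i) = 0 := by
        rw [Finset.sum_sub_distrib, h1, h2, sub_self]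
      have hpair : ∑ i ∈ ({i₁, i₂} : Finset (Fin m)), (e i * x i - e i * x' i)
          = ∑ i, (e i * x i - e i * x' i) := by
        apply Finset.sum_subset (Finset.subset_univ _)
        intro i _ hi
        simp only [Finset.mem_insert, Finset.mem_singleton] at hi
        push_neg at hi
        rw [hoff i hi.1 hi.2, sub_self]
      rw [← hpair, Finset.sum_pair hne] at hsum
      linarith [hsum]
    have h1 := hdiff c E₁ hx.2.1 hx'.2.1
    have h2 := hdiff d E₂ hx.2.2 hx'.2.2
    set u := x i₁ - x' i₁ with hu
    set v := x i₂ - x' i₂ with hv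
    have hu0 : u = 0 := by
      have : u * (c i₁ * d i₂ - c i₂ * d i₁) = 0 := by linear_combination d i₂ * h1 - c i₂ * h2
      rcases mul_eq_zero.1 this with h | h
      · exact h
      · exact absurd h hdet
    have hv0 : v = 0 := by
      have : v * (c i₁ * d i₂ - c i₂ * d i₁) = 0 := by linear_combination c i₁ * h2 - d i₁ * h1
      rcases mul_eq_zero.1 this with h | h
      · exact h
      · exact absurd h hdet
    funext i
    by_cases hi1 : i = i₁
    · rw [hi1]; have : x i₁ - x' i₁ = 0 := hu0; linarith
    · by_cases hi2 : i = i₂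
      · rw [hi2]; have : x i₂ - x' i₂ = 0 := hv0; linarith
      · exact hoff i hi1 hi2

lemma count2' (N : ℕ) (A B E : ℤ) (hA : A ≠ 0) :
    ((((Icc (-(N:ℤ)) N) ×ˢ (Icc (-(N:ℤ)) N)).filter (fun p => A * p.1 + B * p.2 = E)).card : ℤ) * |A|
      ≤ 2 * N * Int.gcd A B + |A| := by
  set s := (((Icc (-(N:ℤ)) N) ×ˢ (Icc (-(N:ℤ)) N)).filter (fun p => A * p.1 + B * p.2 = E)) with hs
  rcases s.eq_empty_or_nonempty with h | h
  · rw [h]; simp; positivity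
  obtain ⟨p₀, hp₀, hmin⟩ := Finset.exists_min_image s (fun p => p.2) h
  have hmem : ∀ p ∈ s, (p.1 ∈ Icc (-(N:ℤ)) N ∧ p.2 ∈ Icc (-(N:ℤ)) N) ∧ A * p.1 + B * p.2 = E := by
    intro p hp
    simp only [hs, Finset.mem_filter, Finset.mem_product] at hp
    exact hp
  have hg0 : (0:ℤ) < (Int.gcd A B : ℤ) := by
    have : A.gcd B ≠ 0 := fun hc => hA (Int.gcd_eq_zero_iff.1 hc).1
    exact_mod_cast Nat.pos_of_ne_zero this
  have hgA : (Int.gcd A B : ℤ) ∣ A := Int.gcd_dvd_left A B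
  have hgB : (Int.gcd A B : ℤ) ∣ B := Int.gcd_dvd_right A B
  set q : ℤ := A / (Int.gcd A B : ℤ) with hqdef
  have hqg : q * (Int.gcd A B : ℤ) = A := Int.ediv_mul_cancel hgA
  have hq0 : q ≠ 0 := by
    intro hc; rw [hc, zero_mul] at hqg; exact hA hqg.symm
  have habsq : (0:ℤ) < |q| := abs_pos.2 hq0
  have hcop : IsCoprime q (B / (Int.gcd A B : ℤ)) := by
    rw [Int.isCoprime_iff_gcd_eq_one]
    exact Int.gcd_div_gcd_div_gcd (by exact_mod_cast hg0)
  have key : ∀ p ∈ s, |q| ∣ (p.2 - p₀.2) := by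
    intro p hp
    have h1 := (hmem p hp).2
    have h2 := (hmem p₀ hp₀).2
    have hAB : A * (p.1 - p₀.1) = B * (p₀.2 - p.2) := by ring_nf; linarith [h1, h2]
    have hq' : q * (p.1 - p₀.1) = (B / (Int.gcd A B : ℤ)) * (p₀.2 - p.2) := by
      apply mul_left_cancel₀ (show (Int.gcd A B : ℤ) ≠ 0 from ne_of_gt hg0)
      calc (Int.gcd A B : ℤ) * (q * (p.1 - p₀.1)) = (q * (Int.gcd A B : ℤ)) * (p.1 - p₀.1) := by ring
        _ = A * (p.1 - p₀.1) := by rw [hqg]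
        _ = B * (p₀.2 - p.2) := hAB
        _ = (Int.gcd A B : ℤ) * ((B / (Int.gcd A B : ℤ)) * (p₀.2 - p.2)) := by
            rw [show ((Int.gcd A B : ℤ)) * ((B / (Int.gcd A B : ℤ)) * (p₀.2 - p.2))
                = ((Int.gcd A B : ℤ) * (B/(Int.gcd A B : ℤ))) * (p₀.2 - p.2) by ring,
              Int.mul_ediv_cancel' hgB]
    have hdvd : q ∣ (p₀.2 - p.2) :=
      IsCoprime.dvd_of_dvd_mul_left hcop ⟨p.1 - p₀.1, hq'.symm⟩
    rw [abs_dvd, ← neg_sub p₀.2 p.2]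
    exact dvd_neg.2 hdvd
  -- injection into Icc 0 (2N/|q|)
  have hcard : s.card ≤ ((2 * (N:ℤ)) / |q| + 1).toNat := by
    have := Finset.card_le_card_of_injOn (s := s) (fun p : ℤ × ℤ => (p.2 - p₀.2) / |q|)
      (t := Icc (0:ℤ) ((2 * (N:ℤ)) / |q|)) ?_ ?_
    · calc s.card ≤ (Icc (0:ℤ) ((2 * (N:ℤ)) / |q|)).card := this
        _ = ((2 * (N:ℤ)) / |q| + 1 - 0).toNat := Int.card_Icc _ _
        _ = ((2 * (N:ℤ)) / |q| + 1).toNat := by norm_num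
    · intro p hp
      simp only [Finset.mem_coe, Finset.mem_Icc]
      have hkey := key p hp
      have hp2 := (hmem p hp).1.2
      have hp02 := (hmem p₀ hp₀).1.2
      simp only [Finset.mem_Icc] at hp2 hp02
      constructor
      · exact Int.ediv_nonneg (by linarith [hmin p hp]) (le_of_lt habsq)
      · exact Int.ediv_le_ediv habsq (by linarith)
    · intro p hp p' hp' heq
      simp only at heq
      have e2 : p.2 = p'.2 := by
        have h1 := Int.ediv_mul_cancel (key p hp)
        have h2 := Int.ediv_mul_cancel (key p' hp')
        have : p.2 - p₀.2 = p'.2 - p₀.2 := by rw [← h1, ← h2, heq]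
        linarith
      have e1 : p.1 = p'.1 := by
        have h1 := (hmem p hp).2
        have h2 := (hmem p' hp').2
        apply mul_left_cancel₀ hA
        rw [e2] at h1; linarith
      exact Prod.ext e1 e2
  -- conclude
  have habsA : |A| = |q| * (Int.gcd A B : ℤ) := by
    conv_lhs => rw [← hqg]
    rw [abs_mul, abs_of_pos hg0]
  have hdivle : ((2 * (N:ℤ)) / |q|) * |q| ≤ 2 * N := Int.ediv_mul_le _ (ne_of_gt habsq)
  have hdiv0 : 0 ≤ (2 * (N:ℤ)) / |q| := Int.ediv_nonneg (by positivity) (le_of_lt habsq)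
  have hc' : (s.card : ℤ) ≤ (2 * (N:ℤ)) / |q| + 1 := by
    have := hcard
    omega
  calc (s.card : ℤ) * |A| ≤ ((2 * (N:ℤ)) / |q| + 1) * |A| := by
        apply mul_le_mul_of_nonneg_right hc' (abs_nonneg A)
    _ = ((2 * (N:ℤ)) / |q|) * |q| * (Int.gcd A B : ℤ) + |A| := by rw [habsA]; ring
    _ ≤ 2 * N * (Int.gcd A B : ℤ) + |A| := by
        have := mul_le_mul_of_nonneg_right hdivle (le_of_lt hg0)
        linarith


lemma count2R (N : ℕ) (A B E : ℤ) (hA : A ≠ 0) (hB : B ≠ 0) :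
    ((((Icc (-(N:ℤ)) N) ×ˢ (Icc (-(N:ℤ)) N)).filter (fun p => A * p.1 + B * p.2 = E)).card : ℝ)
      ≤ 2 * N * (Int.gcd A B : ℝ) / ((max A.natAbs B.natAbs : ℕ) : ℝ) + 1 := by
  have hmx0 : (0:ℝ) < ((max A.natAbs B.natAbs : ℕ) : ℝ) := by
    have : A.natAbs ≠ 0 := Int.natAbs_ne_zero.2 hA
    have : 0 < max A.natAbs B.natAbs := lt_of_lt_of_le (Nat.pos_of_ne_zero this) (le_max_left _ _)
    exact_mod_cast this
  have key : (((((Icc (-(N:ℤ)) N) ×ˢ (Icc (-(N:ℤ)) N)).filter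
      (fun p => A * p.1 + B * p.2 = E)).card : ℝ)) * ((max A.natAbs B.natAbs : ℕ) : ℝ)
      ≤ 2 * N * (Int.gcd A B : ℝ) + ((max A.natAbs B.natAbs : ℕ) : ℝ) := by
    rcases le_total B.natAbs A.natAbs with hc | hc
    · have hmx : max A.natAbs B.natAbs = A.natAbs := max_eq_left hc
      have h := count2' N A B E hA
      rw [hmx, Nat.cast_natAbs]
      exact_mod_cast h
    · have hmx : max A.natAbs B.natAbs = B.natAbs := max_eq_right hc
      have hcardeq : (((Icc (-(N:ℤ)) N) ×ˢ (Icc (-(N:ℤ)) N)).filter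
          (fun p => A * p.1 + B * p.2 = E)).card
          = (((Icc (-(N:ℤ)) N) ×ˢ (Icc (-(N:ℤ)) N)).filter
          (fun p => B * p.1 + A * p.2 = E)).card := by
        apply Finset.card_nbij (fun p => p.swap)
        · intro p hp
          simp only [Finset.mem_coe, Finset.mem_filter, Finset.mem_product] at hp ⊢
          refine ⟨⟨hp.1.2, hp.1.1⟩, by simp [Prod.swap]; linarith [hp.2]⟩
        · intro p _ p' _ hpp
          exact Prod.swap_injective hpp
        · intro p hp
          refine ⟨p.swap, ?_, by simp⟩
          simp only [Finset.mem_coe, Finset.mem_filter, Finset.mem_product] at hp ⊢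
          refine ⟨⟨hp.1.2, hp.1.1⟩, by simp [Prod.swap]; linarith [hp.2]⟩
        
      have h := count2' N B A E hB
      rw [hmx, hcardeq, Nat.cast_natAbs]
      rw [Int.gcd_comm] at h
      exact_mod_cast h
  calc ((((Icc (-(N:ℤ)) N) ×ˢ (Icc (-(N:ℤ)) N)).filter (fun p => A * p.1 + B * p.2 = E)).card : ℝ)
      ≤ (2 * N * (Int.gcd A B : ℝ) + ((max A.natAbs B.natAbs : ℕ) : ℝ))
        / ((max A.natAbs B.natAbs : ℕ) : ℝ) := by
        rw [le_div_iff₀ hmx0]; exact key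
    _ = 2 * N * (Int.gcd A B : ℝ) / ((max A.natAbs B.natAbs : ℕ) : ℝ) + 1 := by
        field_simp

lemma lin3_card (m N : ℕ) (c : Fin m → ℤ) (j₁ j₂ : Fin m) (hne : j₁ ≠ j₂)
    (h1 : c j₁ ≠ 0) (h2 : c j₂ ≠ 0) (E : ℤ) :
    (((Fintype.piFinset (fun _ : Fin m => Icc (-(N:ℤ)) N)).filter
        (fun y => ∑ j, c j * y j = E)).card : ℝ)
      ≤ (((2*N+1)^(m-2) : ℕ) : ℝ) * (2 * N * (Int.gcd (c j₁) (c j₂) : ℝ)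
          / ((max (c j₁).natAbs (c j₂).natAbs : ℕ) : ℝ) + 1) := by
  classical
  set s := ((Fintype.piFinset (fun _ : Fin m => Icc (-(N:ℤ)) N)).filter
        (fun y => ∑ j, c j * y j = E)) with hs
  set ψ : (Fin m → ℤ) → (Fin m → ℤ) :=
    fun y => Function.update (Function.update y j₁ 0) j₂ 0 with hψ
  have hpsi1 : ∀ y, ψ y j₁ = 0 := by
    intro y; rw [hψ]; simp only
    rw [Function.update_of_ne hne, Function.update_self]
  have hpsi2 : ∀ y, ψ y j₂ = 0 := by
    intro y; rw [hψ]; simp only [Function.update_self]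
  have hpsioff : ∀ y j, j ≠ j₁ → j ≠ j₂ → ψ y j = y j := by
    intro y j ha hb; rw [hψ]; simp only
    rw [Function.update_of_ne hb, Function.update_of_ne ha]
  have hsplit : ∀ y, ∑ j, c j * y j = c j₁ * y j₁ + c j₂ * y j₂ + ∑ j, c j * (ψ y) j := by
    intro y
    have hzero : ∀ j ∈ (Finset.univ : Finset (Fin m)), j ∉ ({j₁, j₂} : Finset (Fin m)) →
        c j * y j - c j * (ψ y) j = 0 := by
      intro j _ hj
      simp only [Finset.mem_insert, Finset.mem_singleton] at hj
      push_neg at hj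
      rw [hpsioff y j hj.1 hj.2, sub_self]
    have : ∑ j ∈ ({j₁, j₂} : Finset (Fin m)), (c j * y j - c j * (ψ y) j)
        = ∑ j, (c j * y j - c j * (ψ y) j) := Finset.sum_subset (Finset.subset_univ _) hzero
    rw [Finset.sum_pair hne, hpsi1, hpsi2] at this
    have h' : ∑ j, (c j * y j - c j * (ψ y) j) = ∑ j, c j * y j - ∑ j, c j * (ψ y) j :=
      Finset.sum_sub_distrib _ _
    rw [h'] at this
    linarith [this]
  have hmaps : ∀ y ∈ s, ψ y ∈ s.image ψ := fun y hy => Finset.mem_image_of_mem _ hy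
  have hfib := Finset.card_eq_sum_card_fiberwise hmaps
  have hfiber : ∀ z ∈ s.image ψ, ((s.filter (fun y => ψ y = z)).card : ℝ)
      ≤ 2 * N * (Int.gcd (c j₁) (c j₂) : ℝ)
          / ((max (c j₁).natAbs (c j₂).natAbs : ℕ) : ℝ) + 1 := by
    intro z _
    refine le_trans ?_ (count2R N (c j₁) (c j₂) (E - ∑ j, c j * z j) h1 h2)
    have hcle : (s.filter (fun y => ψ y = z)).card
        ≤ (((Icc (-(N:ℤ)) N) ×ˢ (Icc (-(N:ℤ)) N)).filter
            (fun p => c j₁ * p.1 + c j₂ * p.2 = E - ∑ j, c j * z j)).card := by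
      apply Finset.card_le_card_of_injOn (fun y => (y j₁, y j₂))
      · intro y hy
        simp only [hs, Finset.mem_coe, Finset.mem_filter, Fintype.mem_piFinset] at hy
        obtain ⟨⟨hybox, hyeq⟩, hyz⟩ := hy
        simp only [Finset.mem_coe, Finset.mem_filter, Finset.mem_product]
        refine ⟨⟨hybox j₁, hybox j₂⟩, ?_⟩
        have := hsplit y
        rw [hyeq] at this
        rw [← hyz]
        linarith [this]
      · intro y hy y' hy' heq
        simp only [Finset.coe_filter, Set.mem_setOf_eq] at hy hy'
        have hz1 : ψ y = z := hy.2
        have hz2 : ψ y' = z := hy'.2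
        have hp1 : y j₁ = y' j₁ := congrArg Prod.fst heq
        have hp2 : y j₂ = y' j₂ := congrArg Prod.snd heq
        funext j
        by_cases ha : j = j₁
        · rw [ha]; exact hp1
        · by_cases hb : j = j₂
          · rw [hb]; exact hp2
          · have := congrFun (hz1.trans hz2.symm) j
            rwa [hpsioff y j ha hb, hpsioff y' j ha hb] at this
    exact_mod_cast hcle
  have himg : (s.image ψ).card ≤ (2*N+1)^(m-2) := by
    rw [← pi_card_two m N j₁ j₂ hne]
    apply Finset.card_le_card
    intro z hz
    obtain ⟨y, hy, rfl⟩ := Finset.mem_image.1 hz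
    simp only [hs, Finset.mem_filter, Fintype.mem_piFinset] at hy
    rw [Fintype.mem_piFinset]
    intro j
    by_cases ha : j = j₁
    · rw [ha, if_pos (Or.inl rfl), hpsi1]; simp
    · by_cases hb : j = j₂
      · rw [hb, if_pos (Or.inr rfl), hpsi2]; simp
      · rw [if_neg (by tauto), hpsioff y j ha hb]
        exact hy.1 j
  have hbnn : (0:ℝ) ≤ 2 * N * (Int.gcd (c j₁) (c j₂) : ℝ)
      / ((max (c j₁).natAbs (c j₂).natAbs : ℕ) : ℝ) + 1 := by positivity
  calc (s.card : ℝ) = ∑ z ∈ s.image ψ, ((s.filter (fun y => ψ y = z)).card : ℝ) := by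
        rw [hfib]; push_cast; rfl
    _ ≤ ∑ z ∈ s.image ψ, (2 * N * (Int.gcd (c j₁) (c j₂) : ℝ)
          / ((max (c j₁).natAbs (c j₂).natAbs : ℕ) : ℝ) + 1) := Finset.sum_le_sum hfiber
    _ = ((s.image ψ).card : ℝ) * (2 * N * (Int.gcd (c j₁) (c j₂) : ℝ)
          / ((max (c j₁).natAbs (c j₂).natAbs : ℕ) : ℝ) + 1) := by
        rw [Finset.sum_const, nsmul_eq_mul]
    _ ≤ (((2*N+1)^(m-2) : ℕ) : ℝ) * (2 * N * (Int.gcd (c j₁) (c j₂) : ℝ)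
          / ((max (c j₁).natAbs (c j₂).natAbs : ℕ) : ℝ) + 1) := by
        apply mul_le_mul_of_nonneg_right _ hbnn
        exact_mod_cast himg

set_option maxHeartbeats 2000000 in
lemma main_count (n k N K : ℕ) (M : Fin n → Fin k → ℤ) (i₁ i₂ : Fin n) (j₁ j₂ : Fin k)
    (hii : i₁ ≠ i₂) (hjj : j₁ ≠ j₂)
    (hdet : M i₁ j₁ * M i₂ j₂ - M i₁ j₂ * M i₂ j₁ ≠ 0)
    (hn : 2 ≤ n) (hk : 2 ≤ k)
    (hK : K = (∑ i, (M i j₁).natAbs) + ∑ i, (M i j₂).natAbs) :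
    ((((Fintype.piFinset fun _ : Fin n => Icc (-(N:ℤ)) N) ×ˢ
        (Fintype.piFinset fun _ : Fin k => Icc (-(N:ℤ)) N)).filter
        (fun p => ∑ j, (∑ i, M i j * p.1 i) * p.2 j = 0)).card : ℝ)
      ≤ (((2*N+1:ℕ)):ℝ)^(k+n-2) * (4 + 16*K*(1 + Real.log (K*N))) := by
  classical
  set P := (Fintype.piFinset fun _ : Fin n => Icc (-(N:ℤ)) N) with hP
  set Q := (Fintype.piFinset fun _ : Fin k => Icc (-(N:ℤ)) N) with hQ
  set A : (Fin n → ℤ) → ℤ := fun x => ∑ i, M i j₁ * x i with hA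
  set B : (Fin n → ℤ) → ℤ := fun x => ∑ i, M i j₂ * x i with hB
  set F := ((P ×ˢ Q).filter (fun p => ∑ j, (∑ i, M i j * p.1 i) * p.2 j = 0)) with hF
  -- basic cardinalities
  have hcardP : P.card = (2*N+1)^n := by
    rw [hP, Fintype.card_piFinset]
    have h21 : ((N:ℤ) + 1 + (N:ℤ)).toNat = 2*N+1 := by omega
    simp [Int.card_Icc, h21]
  have hcardQ : Q.card = (2*N+1)^k := by
    rw [hQ, Fintype.card_piFinset]
    have h21 : ((N:ℤ) + 1 + (N:ℤ)).toNat = 2*N+1 := by omega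
    simp [Int.card_Icc, h21]
  -- nonzero entries in columns j₁ and j₂
  have hcol1 : ∃ i₀, M i₀ j₁ ≠ 0 := by
    by_contra h; push_neg at h
    apply hdet; rw [h i₁, h i₂]; ring
  have hcol2 : ∃ i₀, M i₀ j₂ ≠ 0 := by
    by_contra h; push_neg at h
    apply hdet; rw [h i₁, h i₂]; ring
  -- determinant in the form needed by lin2_card
  have hdet2 : (fun i => M i j₁) i₁ * (fun i => M i j₂) i₂
      - (fun i => M i j₁) i₂ * (fun i => M i j₂) i₁ ≠ 0 := by
    simp only
    intro h; apply hdet; linarith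
  -- split F into four parts
  have hsplit : F.card ≤ (F.filter (fun p => A p.1 = 0 ∧ B p.1 = 0)).card
      + (F.filter (fun p => A p.1 = 0 ∧ B p.1 ≠ 0)).card
      + (F.filter (fun p => A p.1 ≠ 0 ∧ B p.1 = 0)).card
      + (F.filter (fun p => A p.1 ≠ 0 ∧ B p.1 ≠ 0)).card := by
    simp only [ne_eq]
    have h1 := Finset.card_filter_add_card_filter_not (s := F) (p := fun p => A p.1 = 0)
    have h2 := Finset.card_filter_add_card_filter_not
      (s := F.filter (fun p => A p.1 = 0)) (p := fun p => B p.1 = 0)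
    have h3 := Finset.card_filter_add_card_filter_not
      (s := F.filter (fun p => ¬ A p.1 = 0)) (p := fun p => B p.1 = 0)
    have e00 : (F.filter (fun p => A p.1 = 0)).filter (fun p => B p.1 = 0)
        = F.filter (fun p => A p.1 = 0 ∧ B p.1 = 0) := Finset.filter_filter _ _ _
    have e01 : (F.filter (fun p => A p.1 = 0)).filter (fun p => ¬ B p.1 = 0)
        = F.filter (fun p => A p.1 = 0 ∧ ¬ B p.1 = 0) := Finset.filter_filter _ _ _
    have e10 : (F.filter (fun p => ¬ A p.1 = 0)).filter (fun p => B p.1 = 0)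
        = F.filter (fun p => ¬ A p.1 = 0 ∧ B p.1 = 0) := Finset.filter_filter _ _ _
    have e11 : (F.filter (fun p => ¬ A p.1 = 0)).filter (fun p => ¬ B p.1 = 0)
        = F.filter (fun p => ¬ A p.1 = 0 ∧ ¬ B p.1 = 0) := Finset.filter_filter _ _ _
    rw [e00, e01] at h2
    rw [e10, e11] at h3
    omega
  -- case 00
  have hc00 : (F.filter (fun p => A p.1 = 0 ∧ B p.1 = 0)).card ≤ (2*N+1)^(n-2) * (2*N+1)^k := by
    have hsub : F.filter (fun p => A p.1 = 0 ∧ B p.1 = 0)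
        ⊆ (P.filter (fun x => (∑ i, M i j₁ * x i) = 0 ∧ (∑ i, M i j₂ * x i) = 0)) ×ˢ Q := by
      intro p hp
      simp only [hF, hA, hB, Finset.mem_filter, Finset.mem_product] at hp ⊢
      exact ⟨⟨hp.1.1.1, hp.2.1, hp.2.2⟩, hp.1.1.2⟩
    calc (F.filter (fun p => A p.1 = 0 ∧ B p.1 = 0)).card
        ≤ ((P.filter (fun x => (∑ i, M i j₁ * x i) = 0 ∧ (∑ i, M i j₂ * x i) = 0)) ×ˢ Q).card :=
          Finset.card_le_card hsub
      _ = (P.filter (fun x => (∑ i, M i j₁ * x i) = 0 ∧ (∑ i, M i j₂ * x i) = 0)).card * Q.card :=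
          Finset.card_product _ _
      _ ≤ (2*N+1)^(n-2) * (2*N+1)^k := by
          rw [hcardQ]
          apply Nat.mul_le_mul_right
          exact lin2_card n N (fun i => M i j₁) (fun i => M i j₂) i₁ i₂ hii hdet2 0 0
  -- case 01
  have hc01 : (F.filter (fun p => A p.1 = 0 ∧ B p.1 ≠ 0)).card ≤ (2*N+1)^(n-1) * (2*N+1)^(k-1) := by
    obtain ⟨ia, hia⟩ := hcol1
    have hmapsto : ∀ p ∈ F.filter (fun p => A p.1 = 0 ∧ B p.1 ≠ 0),
        p.1 ∈ P.filter (fun x => A x = 0 ∧ B x ≠ 0) := by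
      intro p hp
      simp only [hF, Finset.mem_filter, Finset.mem_product] at hp ⊢
      exact ⟨hp.1.1.1, hp.2⟩
    have hcardeq := Finset.card_eq_sum_card_fiberwise hmapsto
    have hfiber : ∀ x ∈ P.filter (fun x => A x = 0 ∧ B x ≠ 0),
        ((F.filter (fun p => A p.1 = 0 ∧ B p.1 ≠ 0)).filter (fun p => p.1 = x)).card
          ≤ (2*N+1)^(k-1) := by
      intro x hx
      simp only [Finset.mem_filter] at hx
      have hb : (fun j => ∑ i, M i j * x i) j₂ ≠ 0 := hx.2.2
      refine le_trans ?_ (lin1_card k N (fun j => ∑ i, M i j * x i) j₂ hb 0)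
      apply Finset.card_le_card_of_injOn (fun p => p.2)
      · intro p hp
        simp only [hF, Finset.mem_coe, Finset.mem_filter, Finset.mem_product] at hp ⊢
        obtain ⟨⟨⟨⟨hp1, hp2⟩, heq⟩, _⟩, hfst⟩ := hp
        refine ⟨hp2, ?_⟩
        rw [← hfst]
        exact heq
      · intro p hp p' hp' h2
        simp only [Finset.coe_filter, Finset.mem_filter, Set.mem_setOf_eq] at hp hp'
        exact Prod.ext (hp.2.trans hp'.2.symm) h2
    have hxcard : (P.filter (fun x => A x = 0 ∧ B x ≠ 0)).card ≤ (2*N+1)^(n-1) := by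
      refine le_trans (Finset.card_le_card ?_) (lin1_card n N (fun i => M i j₁) ia hia 0)
      intro x hx
      simp only [Finset.mem_filter] at hx ⊢
      exact ⟨hx.1, hx.2.1⟩
    calc (F.filter (fun p => A p.1 = 0 ∧ B p.1 ≠ 0)).card
        = ∑ x ∈ P.filter (fun x => A x = 0 ∧ B x ≠ 0),
            ((F.filter (fun p => A p.1 = 0 ∧ B p.1 ≠ 0)).filter (fun p => p.1 = x)).card :=
          hcardeq
      _ ≤ ∑ _x ∈ P.filter (fun x => A x = 0 ∧ B x ≠ 0), (2*N+1)^(k-1) :=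
          Finset.sum_le_sum hfiber
      _ = (P.filter (fun x => A x = 0 ∧ B x ≠ 0)).card * (2*N+1)^(k-1) := by
          rw [Finset.sum_const, smul_eq_mul]
      _ ≤ (2*N+1)^(n-1) * (2*N+1)^(k-1) := Nat.mul_le_mul_right _ hxcard
  -- case 10
  have hc10 : (F.filter (fun p => A p.1 ≠ 0 ∧ B p.1 = 0)).card ≤ (2*N+1)^(n-1) * (2*N+1)^(k-1) := by
    obtain ⟨ib, hib⟩ := hcol2
    have hmapsto : ∀ p ∈ F.filter (fun p => A p.1 ≠ 0 ∧ B p.1 = 0),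
        p.1 ∈ P.filter (fun x => A x ≠ 0 ∧ B x = 0) := by
      intro p hp
      simp only [hF, Finset.mem_filter, Finset.mem_product] at hp ⊢
      exact ⟨hp.1.1.1, hp.2⟩
    have hcardeq := Finset.card_eq_sum_card_fiberwise hmapsto
    have hfiber : ∀ x ∈ P.filter (fun x => A x ≠ 0 ∧ B x = 0),
        ((F.filter (fun p => A p.1 ≠ 0 ∧ B p.1 = 0)).filter (fun p => p.1 = x)).card
          ≤ (2*N+1)^(k-1) := by
      intro x hx
      simp only [Finset.mem_filter] at hx
      have ha : (fun j => ∑ i, M i j * x i) j₁ ≠ 0 := hx.2.1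
      refine le_trans ?_ (lin1_card k N (fun j => ∑ i, M i j * x i) j₁ ha 0)
      apply Finset.card_le_card_of_injOn (fun p => p.2)
      · intro p hp
        simp only [hF, Finset.mem_coe, Finset.mem_filter, Finset.mem_product] at hp ⊢
        obtain ⟨⟨⟨⟨hp1, hp2⟩, heq⟩, _⟩, hfst⟩ := hp
        refine ⟨hp2, ?_⟩
        rw [← hfst]
        exact heq
      · intro p hp p' hp' h2
        simp only [Finset.coe_filter, Finset.mem_filter, Set.mem_setOf_eq] at hp hp'
        exact Prod.ext (hp.2.trans hp'.2.symm) h2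
    have hxcard : (P.filter (fun x => A x ≠ 0 ∧ B x = 0)).card ≤ (2*N+1)^(n-1) := by
      refine le_trans (Finset.card_le_card ?_) (lin1_card n N (fun i => M i j₂) ib hib 0)
      intro x hx
      simp only [Finset.mem_filter] at hx ⊢
      exact ⟨hx.1, hx.2.2⟩
    calc (F.filter (fun p => A p.1 ≠ 0 ∧ B p.1 = 0)).card
        = ∑ x ∈ P.filter (fun x => A x ≠ 0 ∧ B x = 0),
            ((F.filter (fun p => A p.1 ≠ 0 ∧ B p.1 = 0)).filter (fun p => p.1 = x)).card :=
          hcardeq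
      _ ≤ ∑ _x ∈ P.filter (fun x => A x ≠ 0 ∧ B x = 0), (2*N+1)^(k-1) :=
          Finset.sum_le_sum hfiber
      _ = (P.filter (fun x => A x ≠ 0 ∧ B x = 0)).card * (2*N+1)^(k-1) := by
          rw [Finset.sum_const, smul_eq_mul]
      _ ≤ (2*N+1)^(n-1) * (2*N+1)^(k-1) := Nat.mul_le_mul_right _ hxcard
  -- case 11
  have hc11 : ((F.filter (fun p => A p.1 ≠ 0 ∧ B p.1 ≠ 0)).card : ℝ)
      ≤ (((2*N+1)^(k-2) : ℕ) : ℝ) * (2*N * (8 * (((2*N+1)^(n-2):ℕ):ℝ)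
          * ((K*N:ℕ) * (1 + Real.log (K*N:ℕ)))) + (((2*N+1)^n : ℕ):ℝ)) := by
    set t11 := P.filter (fun x => A x ≠ 0 ∧ B x ≠ 0) with ht11
    set f : ℕ × ℕ → ℝ := fun q => (Nat.gcd q.1 q.2 : ℝ) / ((max q.1 q.2 : ℕ) : ℝ) with hf
    have hfq : ∀ q : ℕ × ℕ, 0 ≤ f q := by
      intro q; rw [hf]; exact div_nonneg (Nat.cast_nonneg _) (Nat.cast_nonneg _)
    have hmapsto : ∀ p ∈ F.filter (fun p => A p.1 ≠ 0 ∧ B p.1 ≠ 0), p.1 ∈ t11 := by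
      intro p hp
      simp only [hF, ht11, Finset.mem_filter, Finset.mem_product] at hp ⊢
      exact ⟨hp.1.1.1, hp.2⟩
    have hcardeq := Finset.card_eq_sum_card_fiberwise hmapsto
    -- fiberwise bound over x
    have hfiber : ∀ x ∈ t11,
        (((F.filter (fun p => A p.1 ≠ 0 ∧ B p.1 ≠ 0)).filter (fun p => p.1 = x)).card : ℝ)
          ≤ (((2*N+1)^(k-2):ℕ):ℝ) * (2 * N * f ((A x).natAbs, (B x).natAbs) + 1) := by
      intro x hx
      simp only [ht11, Finset.mem_filter] at hx
      have ha : (fun j => ∑ i, M i j * x i) j₁ ≠ 0 := hx.2.1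
      have hb : (fun j => ∑ i, M i j * x i) j₂ ≠ 0 := hx.2.2
      have hcle : ((F.filter (fun p => A p.1 ≠ 0 ∧ B p.1 ≠ 0)).filter (fun p => p.1 = x)).card
          ≤ (Q.filter (fun y => ∑ j, (∑ i, M i j * x i) * y j = 0)).card := by
        apply Finset.card_le_card_of_injOn (fun p => p.2)
        · intro p hp
          simp only [hF, Finset.mem_coe, Finset.mem_filter, Finset.mem_product] at hp ⊢
          obtain ⟨⟨⟨⟨hp1, hp2⟩, heq⟩, _⟩, hfst⟩ := hp
          refine ⟨hp2, ?_⟩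
          rw [← hfst]
          exact heq
        · intro p hp p' hp' h2
          simp only [Finset.coe_filter, Finset.mem_filter, Set.mem_setOf_eq] at hp hp'
          exact Prod.ext (hp.2.trans hp'.2.symm) h2
      have h3 := lin3_card k N (fun j => ∑ i, M i j * x i) j₁ j₂ hjj ha hb 0
      calc (((F.filter (fun p => A p.1 ≠ 0 ∧ B p.1 ≠ 0)).filter (fun p => p.1 = x)).card : ℝ)
          ≤ ((Q.filter (fun y => ∑ j, (∑ i, M i j * x i) * y j = 0)).card : ℝ) := by
            exact_mod_cast hcle
        _ ≤ (((2*N+1)^(k-2):ℕ):ℝ) * (2 * N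
              * (Int.gcd ((fun j => ∑ i, M i j * x i) j₁) ((fun j => ∑ i, M i j * x i) j₂) : ℝ)
              / ((max ((fun j => ∑ i, M i j * x i) j₁).natAbs
                    ((fun j => ∑ i, M i j * x i) j₂).natAbs : ℕ) : ℝ) + 1) := h3
        _ = (((2*N+1)^(k-2):ℕ):ℝ) * (2 * N * f ((A x).natAbs, (B x).natAbs) + 1) := by
            rw [hf, mul_div_assoc]
            rfl
    -- bound on the values of A and B
    have hABbound : ∀ x ∈ P, (A x).natAbs ≤ K*N ∧ (B x).natAbs ≤ K*N := by
      intro x hxP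
      rw [hP, Fintype.mem_piFinset] at hxP
      have hbox : ∀ i, |x i| ≤ (N:ℤ) := by
        intro i
        have := hxP i
        rw [Finset.mem_Icc] at this
        rw [abs_le]; exact ⟨this.1, this.2⟩
      have hgen : ∀ (jj : Fin k), (∑ i, M i jj * x i).natAbs ≤ (∑ i, (M i jj).natAbs) * N := by
        intro jj
        have h1 : |∑ i, M i jj * x i| ≤ ∑ i, |M i jj * x i| := Finset.abs_sum_le_sum_abs _ _
        have h2 : ∑ i, |M i jj * x i| ≤ ∑ i, |M i jj| * (N:ℤ) := by
          apply Finset.sum_le_sum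
          intro i _
          rw [abs_mul]
          exact mul_le_mul_of_nonneg_left (hbox i) (abs_nonneg _)
        have h3 : ∑ i, |M i jj| * (N:ℤ) = ((∑ i, (M i jj).natAbs : ℕ) : ℤ) * N := by
          rw [← Finset.sum_mul]
          congr 1
          push_cast
          rfl
        have h5 : ((∑ i, M i jj * x i).natAbs : ℤ) = |∑ i, M i jj * x i| := (Int.abs_eq_natAbs _).symm
        have h6 : ((∑ i, M i jj * x i).natAbs : ℤ) ≤ ((∑ i, (M i jj).natAbs : ℕ) : ℤ) * N := by
          rw [h5]
          exact le_trans (le_trans h1 h2) (le_of_eq h3)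
        exact_mod_cast h6
      constructor
      · refine le_trans (hgen j₁) ?_
        apply Nat.mul_le_mul_right
        omega
      · refine le_trans (hgen j₂) ?_
        apply Nat.mul_le_mul_right
        omega
    have hphi : ∀ x ∈ t11, ((A x).natAbs, (B x).natAbs) ∈ (Icc 1 (K*N) ×ˢ Icc 1 (K*N)) := by
      intro x hx
      simp only [ht11, Finset.mem_filter] at hx
      obtain ⟨hxP, ha, hb⟩ := hx
      obtain ⟨h1, h2⟩ := hABbound x hxP
      simp only [Finset.mem_product, Finset.mem_Icc]
      refine ⟨⟨?_, h1⟩, ⟨?_, h2⟩⟩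
      · exact Nat.one_le_iff_ne_zero.2 (Int.natAbs_ne_zero.2 ha)
      · exact Nat.one_le_iff_ne_zero.2 (Int.natAbs_ne_zero.2 hb)
    -- fiber cardinality over values
    have hfibcard : ∀ q : ℕ × ℕ,
        (t11.filter (fun x => ((A x).natAbs, (B x).natAbs) = q)).card ≤ 4 * (2*N+1)^(n-2) := by
      intro q
      obtain ⟨q1, q2⟩ := q
      have hsub : t11.filter (fun x => ((A x).natAbs, (B x).natAbs) = (q1, q2))
          ⊆ ((P.filter (fun x => A x = (q1:ℤ) ∧ B x = (q2:ℤ))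
              ∪ P.filter (fun x => A x = (q1:ℤ) ∧ B x = -(q2:ℤ)))
            ∪ (P.filter (fun x => A x = -(q1:ℤ) ∧ B x = (q2:ℤ))
              ∪ P.filter (fun x => A x = -(q1:ℤ) ∧ B x = -(q2:ℤ)))) := by
        intro x hx
        simp only [ht11, Finset.mem_filter, Prod.mk.injEq] at hx
        obtain ⟨⟨hxP, _, _⟩, h1, h2⟩ := hx
        have e1 := Int.natAbs_eq_iff.1 h1
        have e2 := Int.natAbs_eq_iff.1 h2
        simp only [Finset.mem_union, Finset.mem_filter]
        rcases e1 with e1 | e1 <;> rcases e2 with e2 | e2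
        · exact Or.inl (Or.inl ⟨hxP, e1, e2⟩)
        · exact Or.inl (Or.inr ⟨hxP, e1, e2⟩)
        · exact Or.inr (Or.inl ⟨hxP, e1, e2⟩)
        · exact Or.inr (Or.inr ⟨hxP, e1, e2⟩)
      refine le_trans (Finset.card_le_card hsub) ?_
      refine le_trans (Finset.card_union_le _ _) ?_
      have hu1 := Finset.card_union_le
        (P.filter (fun x => A x = (q1:ℤ) ∧ B x = (q2:ℤ)))
        (P.filter (fun x => A x = (q1:ℤ) ∧ B x = -(q2:ℤ)))
      have hu2 := Finset.card_union_le
        (P.filter (fun x => A x = -(q1:ℤ) ∧ B x = (q2:ℤ)))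
        (P.filter (fun x => A x = -(q1:ℤ) ∧ B x = -(q2:ℤ)))
      have b1 : (P.filter (fun x => A x = (q1:ℤ) ∧ B x = (q2:ℤ))).card ≤ (2*N+1)^(n-2) :=
        lin2_card n N (fun i => M i j₁) (fun i => M i j₂) i₁ i₂ hii hdet2 _ _
      have b2 : (P.filter (fun x => A x = (q1:ℤ) ∧ B x = -(q2:ℤ))).card ≤ (2*N+1)^(n-2) :=
        lin2_card n N (fun i => M i j₁) (fun i => M i j₂) i₁ i₂ hii hdet2 _ _
      have b3 : (P.filter (fun x => A x = -(q1:ℤ) ∧ B x = (q2:ℤ))).card ≤ (2*N+1)^(n-2) :=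
        lin2_card n N (fun i => M i j₁) (fun i => M i j₂) i₁ i₂ hii hdet2 _ _
      have b4 : (P.filter (fun x => A x = -(q1:ℤ) ∧ B x = -(q2:ℤ))).card ≤ (2*N+1)^(n-2) :=
        lin2_card n N (fun i => M i j₁) (fun i => M i j₂) i₁ i₂ hii hdet2 _ _
      omega
    -- sum of f over fibers
    have hsum : ∑ x ∈ t11, f ((A x).natAbs, (B x).natAbs)
        ≤ 8 * (((2*N+1)^(n-2):ℕ):ℝ) * ((K*N:ℕ) * (1 + Real.log (K*N:ℕ))) := by
      have hw := Finset.sum_fiberwise_of_maps_to hphi (fun x => f ((A x).natAbs, (B x).natAbs))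
      rw [← hw]
      have hinner : ∀ q ∈ (Icc 1 (K*N) ×ˢ Icc 1 (K*N)),
          ∑ x ∈ t11.filter (fun x => ((A x).natAbs, (B x).natAbs) = q),
            f ((A x).natAbs, (B x).natAbs)
          ≤ (4 * (2*N+1)^(n-2) : ℕ) * f q := by
        intro q _
        have : ∑ x ∈ t11.filter (fun x => ((A x).natAbs, (B x).natAbs) = q),
            f ((A x).natAbs, (B x).natAbs)
            = (t11.filter (fun x => ((A x).natAbs, (B x).natAbs) = q)).card * f q := by
          rw [Finset.sum_congr rfl (fun x hx => by rw [(Finset.mem_filter.1 hx).2])]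
          rw [Finset.sum_const, nsmul_eq_mul]
        rw [this]
        apply mul_le_mul_of_nonneg_right _ (hfq q)
        exact_mod_cast hfibcard q
      refine le_trans (Finset.sum_le_sum hinner) ?_
      rw [← Finset.mul_sum]
      have hsq : ∑ q ∈ (Icc 1 (K*N) ×ˢ Icc 1 (K*N)), f q ≤ 2 * ((K*N:ℕ) * (1 + Real.log (K*N:ℕ))) := by
        rw [Finset.sum_product]
        refine le_trans (le_of_eq ?_) (gcd_square_bound (K*N))
        apply Finset.sum_congr rfl; intro a _; apply Finset.sum_congr rfl; intro b _
        rw [hf]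
      calc ((4 * (2*N+1)^(n-2) : ℕ) : ℝ) * ∑ q ∈ (Icc 1 (K*N) ×ˢ Icc 1 (K*N)), f q
          ≤ ((4 * (2*N+1)^(n-2) : ℕ) : ℝ) * (2 * ((K*N:ℕ) * (1 + Real.log (K*N:ℕ)))) := by
            apply mul_le_mul_of_nonneg_left hsq (by positivity)
        _ = 8 * (((2*N+1)^(n-2):ℕ):ℝ) * ((K*N:ℕ) * (1 + Real.log (K*N:ℕ))) := by
            push_cast; ring
      
    have hct11 : (t11.card : ℝ) ≤ (((2*N+1)^n : ℕ) : ℝ) := by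
      have : t11.card ≤ P.card := Finset.card_le_card (Finset.filter_subset _ _)
      rw [hcardP] at this
      exact_mod_cast this
    -- put it together
    have hlogKN : (0:ℝ) ≤ Real.log (K*N:ℕ) := Real.log_natCast_nonneg _
    calc ((F.filter (fun p => A p.1 ≠ 0 ∧ B p.1 ≠ 0)).card : ℝ)
        = ∑ x ∈ t11, (((F.filter (fun p => A p.1 ≠ 0 ∧ B p.1 ≠ 0)).filter
            (fun p => p.1 = x)).card : ℝ) := by
          rw [hcardeq]; push_cast; rfl
      _ ≤ ∑ x ∈ t11, (((2*N+1)^(k-2):ℕ):ℝ) * (2 * N * f ((A x).natAbs, (B x).natAbs) + 1) :=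
          Finset.sum_le_sum hfiber
      _ = (((2*N+1)^(k-2):ℕ):ℝ) * (2 * N * (∑ x ∈ t11, f ((A x).natAbs, (B x).natAbs))
            + (t11.card : ℝ)) := by
          rw [← Finset.mul_sum, Finset.sum_add_distrib, Finset.sum_const, ← Finset.mul_sum]
          push_cast
          ring
      _ ≤ (((2*N+1)^(k-2) : ℕ) : ℝ) * (2*N * (8 * (((2*N+1)^(n-2):ℕ):ℝ)
            * ((K*N:ℕ) * (1 + Real.log (K*N:ℕ)))) + (((2*N+1)^n : ℕ):ℝ)) := by
          apply mul_le_mul_of_nonneg_left _ (by positivity)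
          apply add_le_add _ hct11
          apply mul_le_mul_of_nonneg_left hsum (by positivity)
  -- assembly
  have e1 : (2*N+1)^(n-2) * (2*N+1)^k = (2*N+1)^(k+n-2) := by rw [← pow_add]; congr 1; omega
  have e2 : (2*N+1)^(n-1) * (2*N+1)^(k-1) = (2*N+1)^(k+n-2) := by rw [← pow_add]; congr 1; omega
  have e3 : (2*N+1)^(k-2) * (2*N+1)^n = (2*N+1)^(k+n-2) := by rw [← pow_add]; congr 1; omega
  have e4 : (2*N+1)^(k-2) * (2*N+1)^(n-2) * (2*N+1)^2 = (2*N+1)^(k+n-2) := by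
    rw [mul_assoc, ← pow_add, ← pow_add]; congr 1; omega
  have hsum3 : (F.filter (fun p => A p.1 = 0 ∧ B p.1 = 0)).card
      + (F.filter (fun p => A p.1 = 0 ∧ B p.1 ≠ 0)).card
      + (F.filter (fun p => A p.1 ≠ 0 ∧ B p.1 = 0)).card ≤ 3 * (2*N+1)^(k+n-2) := by
    have h00 := hc00; have h01 := hc01; have h10 := hc10
    rw [e1] at h00; rw [e2] at h01; rw [e2] at h10
    omega
  have L0 : 0 ≤ Real.log ((K*N : ℕ) : ℝ) := Real.log_natCast_nonneg _
  have hle1 : (F.card : ℝ) ≤ 3 * (((2*N+1)^(k+n-2) : ℕ) : ℝ)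
      + ((F.filter (fun p => A p.1 ≠ 0 ∧ B p.1 ≠ 0)).card : ℝ) := by
    have hs : F.card ≤ 3 * (2*N+1)^(k+n-2)
        + (F.filter (fun p => A p.1 ≠ 0 ∧ B p.1 ≠ 0)).card := by omega
    exact_mod_cast hs
  have hN2 : ((N:ℝ))^2 ≤ (((2*N+1)^2 : ℕ) : ℝ) := by
    have h := Nat.pow_le_pow_left (show N ≤ 2*N+1 by omega) 2
    exact_mod_cast h
  have habnn : (0:ℝ) ≤ (((2*N+1)^(n-2):ℕ):ℝ) * (((2*N+1)^(k-2):ℕ):ℝ) := by positivity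
  have hKL : (0:ℝ) ≤ 16*(K:ℝ)*(1 + Real.log ((K*N:ℕ):ℝ)) := by
    apply mul_nonneg (by positivity)
    linarith
  have E3 : (((2*N+1)^(k-2):ℕ):ℝ) * (((2*N+1)^n:ℕ):ℝ)
      = (((2*N+1)^(k+n-2):ℕ):ℝ) := by exact_mod_cast e3
  have E4 : (((2*N+1)^(k-2):ℕ):ℝ) * (((2*N+1)^(n-2):ℕ):ℝ) * (((2*N+1)^2:ℕ):ℝ)
      = (((2*N+1)^(k+n-2):ℕ):ℝ) := by exact_mod_cast e4
  have hmain : (((2*N+1)^(k-2) : ℕ) : ℝ) * (2*N * (8 * (((2*N+1)^(n-2):ℕ):ℝ)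
        * ((K*N:ℕ) * (1 + Real.log (K*N:ℕ)))) + (((2*N+1)^n : ℕ):ℝ))
      ≤ 16*(K:ℝ)*(1 + Real.log ((K*N:ℕ):ℝ)) * (((2*N+1)^(k+n-2):ℕ):ℝ)
        + (((2*N+1)^(k+n-2):ℕ):ℝ) := by
    have expand : (((2*N+1)^(k-2) : ℕ) : ℝ) * (2*N * (8 * (((2*N+1)^(n-2):ℕ):ℝ)
        * ((K*N:ℕ) * (1 + Real.log (K*N:ℕ)))) + (((2*N+1)^n : ℕ):ℝ))
        = 16*(K:ℝ)*(1 + Real.log ((K*N:ℕ):ℝ))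
            * ((N:ℝ)^2 * ((((2*N+1)^(n-2):ℕ):ℝ) * (((2*N+1)^(k-2):ℕ):ℝ)))
          + (((2*N+1)^(k-2):ℕ):ℝ) * (((2*N+1)^n:ℕ):ℝ) := by
      push_cast
      ring
    rw [expand, E3]
    apply add_le_add_left
    calc 16*(K:ℝ)*(1 + Real.log ((K*N:ℕ):ℝ))
          * ((N:ℝ)^2 * ((((2*N+1)^(n-2):ℕ):ℝ) * (((2*N+1)^(k-2):ℕ):ℝ)))
        ≤ 16*(K:ℝ)*(1 + Real.log ((K*N:ℕ):ℝ))
          * ((((2*N+1)^2:ℕ):ℝ) * ((((2*N+1)^(n-2):ℕ):ℝ) * (((2*N+1)^(k-2):ℕ):ℝ))) := by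
          apply mul_le_mul_of_nonneg_left _ hKL
          exact mul_le_mul_of_nonneg_right hN2 habnn
      _ = 16*(K:ℝ)*(1 + Real.log ((K*N:ℕ):ℝ)) * (((2*N+1)^(k+n-2):ℕ):ℝ) := by
          rw [← E4]; ring
  have h11 := le_trans hc11 hmain
  have final : (F.card : ℝ) ≤ (((2*N+1)^(k+n-2):ℕ):ℝ)
      * (4 + 16*(K:ℝ)*(1 + Real.log ((K*N:ℕ):ℝ))) := by
    calc (F.card : ℝ) ≤ 3 * (((2*N+1)^(k+n-2) : ℕ) : ℝ)
          + ((F.filter (fun p => A p.1 ≠ 0 ∧ B p.1 ≠ 0)).card : ℝ) := hle1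
      _ ≤ 3 * (((2*N+1)^(k+n-2) : ℕ) : ℝ)
          + (16*(K:ℝ)*(1 + Real.log ((K*N:ℕ):ℝ)) * (((2*N+1)^(k+n-2):ℕ):ℝ)
            + (((2*N+1)^(k+n-2):ℕ):ℝ)) := by linarith
      _ = (((2*N+1)^(k+n-2):ℕ):ℝ) * (4 + 16*(K:ℝ)*(1 + Real.log ((K*N:ℕ):ℝ))) := by ring
  refine le_trans final (le_of_eq ?_)
  push_cast
  ring


lemma exists_minor (n k : ℕ) (C : Matrix (Fin n) (Fin k) ℚ) (hC : 2 ≤ C.rank) :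
    ∃ i₁ i₂ : Fin n, ∃ j₁ j₂ : Fin k, i₁ ≠ i₂ ∧ j₁ ≠ j₂ ∧
      C i₁ j₁ * C i₂ j₂ - C i₁ j₂ * C i₂ j₁ ≠ 0 := by
  by_contra hcon
  push_neg at hcon
  have hmin : ∀ i₁ i₂ j₁ j₂, C i₁ j₁ * C i₂ j₂ - C i₁ j₂ * C i₂ j₁ = 0 := by
    intro i₁ i₂ j₁ j₂
    by_cases hi : i₁ = i₂
    · subst hi; ring
    · by_cases hj : j₁ = j₂
      · subst hj; ring
      · exact hcon i₁ i₂ j₁ j₂ hi hj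
  have hr : C.rank ≤ 1 := by
    by_cases h0 : ∀ i j, C i j = 0
    · have hz : C = 0 := by
        ext i j; exact h0 i j
      rw [hz, Matrix.rank_zero]
      omega
    · push_neg at h0
      obtain ⟨i₀, j₀, hij⟩ := h0
      have hrange : LinearMap.range C.mulVecLin
          ≤ Submodule.span ℚ {(fun i => C i j₀ : Fin n → ℚ)} := by
        rintro z ⟨v, rfl⟩
        have hvec : C.mulVecLin v = ∑ j, (v j * (C i₀ j / C i₀ j₀)) • (fun i => C i j₀) := by
          funext i
          rw [Matrix.mulVecLin_apply]
          have hmv : C.mulVec v i = ∑ j, C i j * v j := by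
            simp [Matrix.mulVec, dotProduct]
          rw [hmv, Finset.sum_apply]
          apply Finset.sum_congr rfl
          intro j _
          simp only [Pi.smul_apply, smul_eq_mul]
          have hm := hmin i₀ i j₀ j
          have hc0 : C i₀ j₀ ≠ 0 := hij
          field_simp
          linear_combination v j * hm
        rw [hvec]
        apply Submodule.sum_mem
        intro j _
        apply Submodule.smul_mem
        exact Submodule.mem_span_singleton_self _
      have h1 : C.rank = Module.finrank ℚ (LinearMap.range C.mulVecLin) := rfl
      rw [h1]
      refine le_trans (Submodule.finrank_mono hrange) ?_
      by_cases hz : (fun i => C i j₀ : Fin n → ℚ) = 0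
      · rw [hz]
        rw [Submodule.span_zero_singleton]
        simp
      · rw [finrank_span_singleton hz]
  omega

/-- Zhao's Lemma 5.8: if C is an n×k rational matrix of rank at least 2, then the
number of integer pairs (x,y) with |xᵢ| ≤ X, |yⱼ| ≤ X and xᵀCy = 0 is
O(X^{k+n-2} log X). -/
theorem stmt_1 (n k : ℕ) (C : Matrix (Fin n) (Fin k) ℚ) (hC : 2 ≤ C.rank) :
    ∃ c : ℝ, 0 < c ∧ ∀ X : ℝ, 2 ≤ X →
      (({p : (Fin n → ℤ) × (Fin k → ℤ) |
          (∀ i, |(p.1 i : ℝ)| ≤ X) ∧ (∀ j, |(p.2 j : ℝ)| ≤ X) ∧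
          dotProduct (fun i => (p.1 i : ℚ)) (C.mulVec (fun j => (p.2 j : ℚ))) = 0}).ncard : ℝ)
      ≤ c * X ^ (k + n - 2) * Real.log X := by
  classical
  obtain ⟨i₁, i₂, j₁, j₂, hii, hjj, hminor⟩ := exists_minor n k C hC
  have hn : 2 ≤ n := by
    have h := Matrix.rank_le_card_height C
    simp only [Fintype.card_fin] at h
    omega
  have hk : 2 ≤ k := by
    have h := Matrix.rank_le_card_width C
    simp only [Fintype.card_fin] at h
    omega
  -- clear denominators
  set D : ℕ := ∏ i, ∏ j, (C i j).den with hD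
  have hDd : ∀ i j, (C i j).den ∣ D := by
    intro i j
    refine dvd_trans (Finset.dvd_prod_of_mem (fun j => (C i j).den) (Finset.mem_univ j)) ?_
    exact Finset.dvd_prod_of_mem (fun i => ∏ j, (C i j).den) (Finset.mem_univ i)
  have hD0 : 0 < D := by
    rw [hD]
    exact Finset.prod_pos (fun i _ => Finset.prod_pos (fun j _ => (C i j).pos))
  set M : Fin n → Fin k → ℤ := fun i j => (C i j).num * ((D / (C i j).den : ℕ) : ℤ) with hM
  have hMC : ∀ i j, ((M i j : ℚ)) = (D:ℚ) * C i j := by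
    intro i j
    have hden : ((C i j).den : ℚ) ≠ 0 := by
      have h0 := (C i j).den_nz
      exact_mod_cast h0
    
    have hdiv : (((D / (C i j).den : ℕ)) : ℚ) = (D:ℚ) / ((C i j).den : ℚ) :=
      Nat.cast_div (hDd i j) hden
    rw [hM]
    rw [Int.cast_mul, Int.cast_natCast, hdiv]
    conv_rhs => rw [← Rat.num_div_den (C i j)]
    field_simp
  have hdetM : M i₁ j₁ * M i₂ j₂ - M i₁ j₂ * M i₂ j₁ ≠ 0 := by
    intro h
    apply hminor
    have hq : ((M i₁ j₁ * M i₂ j₂ - M i₁ j₂ * M i₂ j₁ : ℤ):ℚ) = 0 := by rw [h]; norm_num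
    push_cast at hq
    rw [hMC, hMC, hMC, hMC] at hq
    have hD0' : ((D:ℚ)) ≠ 0 := by
      have hne : D ≠ 0 := by omega
      exact_mod_cast hne
    have h2 : (D:ℚ)^2 * (C i₁ j₁ * C i₂ j₂ - C i₁ j₂ * C i₂ j₁) = 0 := by
      linear_combination hq
    rcases mul_eq_zero.1 h2 with h3 | h3
    · exact absurd h3 (pow_ne_zero 2 hD0')
    · exact h3
  set K : ℕ := (∑ i, (M i j₁).natAbs) + ∑ i, (M i j₂).natAbs with hK
  have hK1 : 1 ≤ K := by
    by_contra h
    push_neg at h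
    interval_cases K
    · have h0 : ∀ i, (M i j₁).natAbs = 0 := by
        intro i
        have := Finset.sum_eq_zero_iff.1 (by omega : (∑ i, (M i j₁).natAbs) = 0) i (Finset.mem_univ i)
        exact this
      have h1 : M i₁ j₁ = 0 := Int.natAbs_eq_zero.1 (h0 i₁)
      have h2 : M i₂ j₁ = 0 := Int.natAbs_eq_zero.1 (h0 i₂)
      apply hdetM
      rw [h1, h2]
      ring
  have hlogK : (0:ℝ) ≤ Real.log K := Real.log_natCast_nonneg _
  have hlog2 : (0:ℝ) < Real.log 2 := Real.log_pos (by norm_num)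
  have hK0 : (0:ℝ) ≤ (K:ℝ) := Nat.cast_nonneg _
  refine ⟨(3:ℝ)^(k+n-2) * ((4 + 16*K*(1+Real.log K))/Real.log 2 + 16*K), ?_, ?_⟩
  · apply mul_pos (by positivity)
    apply add_pos_of_pos_of_nonneg
    · apply div_pos _ hlog2
      nlinarith
    · positivity
  intro X hX
  set N : ℕ := (⌊X⌋).toNat with hN
  have hfl : (0:ℤ) ≤ ⌊X⌋ := by
    rw [Int.le_floor]
    push_cast
    linarith
  have hNZ : ((N:ℤ)) = ⌊X⌋ := Int.toNat_of_nonneg hfl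
  have hXN : ((N:ℝ)) ≤ X := by
    have h1 : ((⌊X⌋:ℤ):ℝ) ≤ X := Int.floor_le X
    have h2 : ((N:ℤ):ℝ) = ((⌊X⌋:ℤ):ℝ) := by exact_mod_cast congrArg (fun z : ℤ => (z:ℝ)) hNZ
    push_cast at h2 ⊢
    linarith
  have hN2 : 2 ≤ N := by
    have : (2:ℤ) ≤ ⌊X⌋ := by
      rw [Int.le_floor]
      push_cast
      linarith
    omega
  -- the finite set
  set F := (((Fintype.piFinset fun _ : Fin n => Icc (-(N:ℤ)) N) ×ˢ
        (Fintype.piFinset fun _ : Fin k => Icc (-(N:ℤ)) N)).filter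
        (fun p => ∑ j, (∑ i, M i j * p.1 i) * p.2 j = 0)) with hF
  have hsub : {p : (Fin n → ℤ) × (Fin k → ℤ) |
          (∀ i, |(p.1 i : ℝ)| ≤ X) ∧ (∀ j, |(p.2 j : ℝ)| ≤ X) ∧
          dotProduct (fun i => (p.1 i : ℚ)) (C.mulVec (fun j => (p.2 j : ℚ))) = 0} ⊆ ↑F := by
    intro p hp
    obtain ⟨hx, hy, heq⟩ := hp
    have hbox : ∀ (z : ℤ), |(z:ℝ)| ≤ X → z ∈ Icc (-(N:ℤ)) N := by
      intro z hz
      rw [abs_le] at hz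
      rw [Finset.mem_Icc]
      constructor
      · have : -z ≤ ⌊X⌋ := Int.le_floor.2 (by push_cast; linarith [hz.1])
        omega
      · have : z ≤ ⌊X⌋ := Int.le_floor.2 hz.2
        omega
    have hkey : ((∑ j, (∑ i, M i j * p.1 i) * p.2 j : ℤ):ℚ)
        = (D:ℚ) * dotProduct (fun i => (p.1 i : ℚ)) (C.mulVec (fun j => (p.2 j : ℚ))) := by
      push_cast
      have e1 : ∀ j, (∑ i, ((M i j : ℚ)) * (p.1 i : ℚ)) = ∑ i, (D:ℚ) * C i j * (p.1 i : ℚ) :=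
        fun j => Finset.sum_congr rfl (fun i _ => by rw [hMC i j])
      calc ∑ j, (∑ i, ((M i j : ℚ)) * (p.1 i : ℚ)) * (p.2 j : ℚ)
          = ∑ j, (∑ i, (D:ℚ) * C i j * (p.1 i : ℚ)) * (p.2 j : ℚ) := by
            exact Finset.sum_congr rfl (fun j _ => by rw [e1 j])
        _ = ∑ j, ∑ i, (D:ℚ) * C i j * (p.1 i : ℚ) * (p.2 j : ℚ) := by
            exact Finset.sum_congr rfl (fun j _ => Finset.sum_mul _ _ _)
        _ = ∑ i, ∑ j, (D:ℚ) * C i j * (p.1 i : ℚ) * (p.2 j : ℚ) := Finset.sum_comm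
        _ = (D:ℚ) * dotProduct (fun i => (p.1 i : ℚ)) (C.mulVec (fun j => (p.2 j : ℚ))) := by
            rw [dotProduct, Finset.mul_sum]
            apply Finset.sum_congr rfl
            intro i _
            rw [Matrix.mulVec, dotProduct, Finset.mul_sum, Finset.mul_sum]
            apply Finset.sum_congr rfl
            intro j _
            ring
    have heq0 : (∑ j, (∑ i, M i j * p.1 i) * p.2 j : ℤ) = 0 := by
      have : ((∑ j, (∑ i, M i j * p.1 i) * p.2 j : ℤ):ℚ) = 0 := by
        rw [hkey, heq, mul_zero]
      exact_mod_cast this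
    rw [hF]
    simp only [Finset.coe_filter, Set.mem_setOf_eq, Finset.mem_product, Fintype.mem_piFinset]
    exact ⟨⟨fun i => hbox _ (hx i), fun j => hbox _ (hy j)⟩, heq0⟩
  have hncard : (({p : (Fin n → ℤ) × (Fin k → ℤ) |
          (∀ i, |(p.1 i : ℝ)| ≤ X) ∧ (∀ j, |(p.2 j : ℝ)| ≤ X) ∧
          dotProduct (fun i => (p.1 i : ℚ)) (C.mulVec (fun j => (p.2 j : ℚ))) = 0}).ncard : ℝ)
      ≤ (F.card : ℝ) := by
    have h1 := Set.ncard_le_ncard hsub F.finite_toSet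
    rw [Set.ncard_coe_finset] at h1
    exact_mod_cast h1
  have hmc := main_count n k N K M i₁ i₂ j₁ j₂ hii hjj hdetM hn hk hK
  -- final numeric juggling
  have hY3X : (((2*N+1:ℕ)):ℝ) ≤ 3*X := by
    push_cast
    linarith
  have hYpow : (((2*N+1:ℕ)):ℝ)^(k+n-2) ≤ (3:ℝ)^(k+n-2) * X^(k+n-2) := by
    rw [← mul_pow]
    exact pow_le_pow_left₀ (by positivity) hY3X _
  have hlogX : Real.log 2 ≤ Real.log X := Real.log_le_log (by norm_num) hX
  have hXpos : (0:ℝ) < X := by linarith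
  have hlogXpos : 0 < Real.log X := lt_of_lt_of_le hlog2 hlogX
  have hlogKN : Real.log ((K:ℝ)*(N:ℝ)) ≤ Real.log K + Real.log X := by
    have hKpos : (0:ℝ) < K := by exact_mod_cast hK1
    have hNpos : (0:ℝ) < N := by
      have : (0:ℕ) < N := by omega
      exact_mod_cast this
    rw [Real.log_mul (ne_of_gt hKpos) (ne_of_gt hNpos)]
    have : Real.log (N:ℝ) ≤ Real.log X := Real.log_le_log hNpos hXN
    linarith
  have hbr : (4 + 16*(K:ℝ)*(1 + Real.log ((K:ℝ)*(N:ℝ))))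
      ≤ ((4 + 16*K*(1+Real.log K))/Real.log 2 + 16*K) * Real.log X := by
    have ha : (0:ℝ) ≤ 4 + 16*(K:ℝ)*(1+Real.log K) := by nlinarith
    have h1 : 4 + 16*(K:ℝ)*(1+Real.log K)
        ≤ (4 + 16*(K:ℝ)*(1+Real.log K))/Real.log 2 * Real.log X := by
      rw [div_mul_eq_mul_div, le_div_iff₀ hlog2]
      nlinarith
    nlinarith [hlogKN, hK0]
  calc (({p : (Fin n → ℤ) × (Fin k → ℤ) |
          (∀ i, |(p.1 i : ℝ)| ≤ X) ∧ (∀ j, |(p.2 j : ℝ)| ≤ X) ∧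
          dotProduct (fun i => (p.1 i : ℚ)) (C.mulVec (fun j => (p.2 j : ℚ))) = 0}).ncard : ℝ)
      ≤ (F.card : ℝ) := hncard
    _ ≤ (((2*N+1:ℕ)):ℝ)^(k+n-2) * (4 + 16*K*(1 + Real.log (K*N))) := hmc
    _ ≤ (((2*N+1:ℕ)):ℝ)^(k+n-2) * (((4 + 16*K*(1+Real.log K))/Real.log 2 + 16*K) * Real.log X) := by
        exact mul_le_mul_of_nonneg_left hbr (by positivity)
    _ ≤ ((3:ℝ)^(k+n-2) * X^(k+n-2)) * (((4 + 16*K*(1+Real.log K))/Real.log 2 + 16*K) * Real.log X) := by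
        apply mul_le_mul_of_nonneg_right hYpow
        apply mul_nonneg _ (le_of_lt hlogXpos)
        have h16 : (0:ℝ) ≤ 16*(K:ℝ)*(1+Real.log K) :=
          mul_nonneg (by positivity) (by linarith)
        have ha : (0:ℝ) ≤ 4 + 16*(K:ℝ)*(1+Real.log K) := by linarith
        have hd : (0:ℝ) ≤ (4 + 16*(K:ℝ)*(1+Real.log K))/Real.log 2 := by
          apply div_nonneg ha (le_of_lt hlog2)
        linarith
    _ = (3:ℝ)^(k+n-2) * ((4 + 16*K*(1+Real.log K))/Real.log 2 + 16*K) * X ^ (k + n - 2) * Real.log X := by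
        ring
end

section
/- Let A be an n×n symmetric integer matrix of the block form A = [[a, ξᵀ],[ξ, D + h·ξξᵀ]] where a ∈ ℤ, ξ = (c₁,…,c_{n−1})ᵀ ∈ ℤ^{n−1} with c₁ ≠ 0, h ∈ ℚ, and D = diag(d₁,…,d_{n−1}) with dᵢ ∈ ℚ. If rank(A) ≥ 6, then there exist five pairwise distinct indices b₁,…,b₅ ∈ {1,…,n−1} with c_{b₁}·d_{b₂}·d_{b₃}·d_{b₄}·d_{b₅} ≠ 0. -/
open Matrix Module Submodule Finset

/-! Every column of `[[a, cᵀ], [c, diagonal d + h c cᵀ]]` lies in the span of `e₀`, `(0, c)` and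
the `e_{i+1}` with `dᵢ ≠ 0`, so its rank is at most `2 + #{i | dᵢ ≠ 0}`. If `c` vanishes wherever
`d` does, `(0, c)` is itself in the span of those `e_{i+1}` and the bound drops to
`1 + #{i | dᵢ ≠ 0}`. Hence rank `≥ 6` leaves two cases: at least five `dᵢ ≠ 0`, and then `c₁`
together with four of the other nonzero `dᵢ` works; or exactly four, and then some `cⱼ ≠ 0 = dⱼ`
together with those four works. -/

theorem Fin.cons_zero_eq_sum_single {R : Type*} [Semiring R] {m : ℕ} (c : Fin m → R) :
    (Fin.cons 0 c : Fin (m + 1) → R) = ∑ i, c i • Pi.single i.succ 1 := by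
  ext k
  cases k using Fin.cases <;> simp [Finset.sum_apply, Pi.single_apply]

theorem Finset.exists_injective_cons_mem {α : Type*} [DecidableEq α] {n : ℕ} {s : Finset α}
    {x : α} (hs : n ≤ #(s.erase x)) :
    ∃ b : Fin (n + 1) → α, Function.Injective b ∧ b 0 = x ∧ ∀ k : Fin n, b k.succ ∈ s := by
  let e := (s.erase x).equivFin.symm
  let g : Fin n → α := fun k => e (Fin.castLE hs k)
  have hg : ∀ k, g k ∈ s.erase x := fun k => (e _).2
  refine ⟨Fin.cons x g, Fin.cons_injective_iff.2 ⟨?_, ?_⟩, rfl, fun k => (mem_erase.1 (hg k)).2⟩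
  · rintro ⟨k, hk⟩
    exact (mem_erase.1 (hg k)).1 hk
  · exact Subtype.val_injective.comp (e.injective.comp (Fin.castLE_injective hs))

namespace Matrix

variable {K : Type*} [Field K] {m : ℕ}

def borderedDiagAddRankOne (a h : K) (c d : Fin m → K) : Matrix (Fin (m + 1)) (Fin (m + 1)) K :=
  of (Fin.cons (Fin.cons a c) fun i => Fin.cons (c i) (diagonal d i + (h * c i) • c))

variable {a h : K} {c d : Fin m → K}

theorem borderedDiagAddRankOne_col_zero :
    (borderedDiagAddRankOne a h c d).col 0 = a • Pi.single 0 1 + Fin.cons 0 c := by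
  ext i
  cases i using Fin.cases <;> simp [borderedDiagAddRankOne]

theorem borderedDiagAddRankOne_col_succ (j : Fin m) :
    (borderedDiagAddRankOne a h c d).col j.succ =
      c j • Pi.single 0 1 + d j • Pi.single j.succ 1 + (h * c j) • Fin.cons 0 c := by
  ext i
  cases i using Fin.cases with
  | zero => simp [borderedDiagAddRankOne]
  | succ i =>
    rcases eq_or_ne i j with rfl | hij
    · simp [borderedDiagAddRankOne]
    · simp [borderedDiagAddRankOne, hij]
      ring

theorem rank_borderedDiagAddRankOne_le_finrank (W : Submodule K (Fin (m + 1) → K))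
    (h₀ : Pi.single 0 1 ∈ W) (hc : Fin.cons 0 c ∈ W)
    (hd : ∀ i, d i ≠ 0 → Pi.single i.succ 1 ∈ W) :
    (borderedDiagAddRankOne a h c d).rank ≤ finrank K W := by
  rw [rank_eq_finrank_span_cols]
  refine Submodule.finrank_mono (span_le.2 ?_)
  rintro _ ⟨j, rfl⟩
  cases j using Fin.cases with
  | zero => rw [borderedDiagAddRankOne_col_zero]; exact add_mem (smul_mem _ _ h₀) hc
  | succ j =>
    rw [borderedDiagAddRankOne_col_succ]
    refine add_mem (add_mem (smul_mem _ _ h₀) ?_) (smul_mem _ _ hc)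
    by_cases hdj : d j = 0
    · simp [hdj]
    · exact smul_mem _ _ (hd j hdj)

variable [DecidableEq K]

theorem rank_borderedDiagAddRankOne_le_two_add :
    (borderedDiagAddRankOne a h c d).rank ≤ 2 + #{i | d i ≠ 0} := by
  let v : Fin 2 ⊕ ({i | d i ≠ 0} : Finset (Fin m)) → Fin (m + 1) → K :=
    Sum.elim ![Pi.single 0 1, Fin.cons 0 c] fun i => Pi.single (i : Fin m).succ 1
  calc (borderedDiagAddRankOne a h c d).rank ≤ finrank K (span K (Set.range v)) :=
        rank_borderedDiagAddRankOne_le_finrank _ (subset_span ⟨.inl 0, rfl⟩)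
          (subset_span ⟨.inl 1, rfl⟩) fun i hi => subset_span ⟨.inr ⟨i, by simpa using hi⟩, rfl⟩
    _ ≤ 2 + #{i | d i ≠ 0} := (finrank_range_le_card v).trans_eq (by
        rw [Fintype.card_sum, Fintype.card_fin, Fintype.card_coe])

theorem rank_borderedDiagAddRankOne_le_one_add (hcd : ∀ i, d i = 0 → c i = 0) :
    (borderedDiagAddRankOne a h c d).rank ≤ 1 + #{i | d i ≠ 0} := by
  let v : Fin 1 ⊕ ({i | d i ≠ 0} : Finset (Fin m)) → Fin (m + 1) → K :=
    Sum.elim ![Pi.single 0 1] fun i => Pi.single (i : Fin m).succ 1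
  have hsingle : ∀ i, d i ≠ 0 → Pi.single i.succ 1 ∈ span K (Set.range v) :=
    fun i hi => subset_span ⟨.inr ⟨i, by simpa using hi⟩, rfl⟩
  have hc : Fin.cons 0 c ∈ span K (Set.range v) := by
    rw [Fin.cons_zero_eq_sum_single]
    refine sum_mem fun i _ => ?_
    by_cases hi : d i = 0
    · simp [hcd i hi]
    · exact smul_mem _ _ (hsingle i hi)
  calc (borderedDiagAddRankOne a h c d).rank ≤ finrank K (span K (Set.range v)) :=
        rank_borderedDiagAddRankOne_le_finrank _ (subset_span ⟨.inl 0, rfl⟩) hc hsingle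
    _ ≤ 1 + #{i | d i ≠ 0} := (finrank_range_le_card v).trans_eq (by
        rw [Fintype.card_sum, Fintype.card_fin, Fintype.card_coe])

theorem exists_ne_zero_le_card_erase_of_add_two_le_rank {n : ℕ}
    (hrank : n + 2 ≤ (borderedDiagAddRankOne a h c d).rank) {i₀ : Fin m} (hi₀ : c i₀ ≠ 0) :
    ∃ j, c j ≠ 0 ∧ n ≤ #(({i | d i ≠ 0} : Finset _).erase j) := by
  have hS : n + 2 ≤ 2 + #{i | d i ≠ 0} := hrank.trans rank_borderedDiagAddRankOne_le_two_add
  by_cases hS' : n + 1 ≤ #{i | d i ≠ 0}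
  · exact ⟨i₀, hi₀, by have := pred_card_le_card_erase (s := {i | d i ≠ 0}) (a := i₀); omega⟩
  · obtain ⟨j, hdj, hcj⟩ : ∃ j, d j = 0 ∧ c j ≠ 0 := by
      by_contra! hcd
      have := hrank.trans (rank_borderedDiagAddRankOne_le_one_add hcd)
      omega
    refine ⟨j, hcj, ?_⟩
    rw [erase_eq_of_notMem (by simp [hdj])]
    omega

end Matrix

/-- Lemma 4.2: if A = [[a, ξᵀ],[ξ, D + h ξ ξᵀ]] is symmetric with ξ = (c₁,…,c_{n-1}),
c₁ ≠ 0, and rank(A) ≥ 6, then there are five pairwise distinct indices b₁,…,b₅ with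
c_{b₁} d_{b₂} d_{b₃} d_{b₄} d_{b₅} ≠ 0. -/
theorem stmt_4 (m : ℕ) (hm : 0 < m) (A : Matrix (Fin (m + 1)) (Fin (m + 1)) ℤ)
    (hsym : A.IsSymm)
    (a : ℤ) (c : Fin m → ℤ) (h : ℚ) (d : Fin m → ℚ)
    (hc1 : c ⟨0, hm⟩ ≠ 0)
    (h00 : A 0 0 = a)
    (hrow : ∀ i : Fin m, A 0 i.succ = c i)
    (hblk : ∀ i j : Fin m, (A i.succ j.succ : ℚ)
        = (if i = j then d i else 0) + h * (c i : ℚ) * (c j : ℚ))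
    (hrank : 6 ≤ (A.map ((↑) : ℤ → ℚ)).rank) :
    ∃ b : Fin 5 → Fin m, Function.Injective b ∧
      (c (b 0) : ℚ) * d (b 1) * d (b 2) * d (b 3) * d (b 4) ≠ 0 := by
  have hA : A.map ((↑) : ℤ → ℚ) = borderedDiagAddRankOne (a : ℚ) h (fun i => (c i : ℚ)) d := by
    ext i j
    cases i using Fin.cases with
    | zero => cases j using Fin.cases <;> simp [borderedDiagAddRankOne, h00, hrow]
    | succ i =>
      cases j using Fin.cases with
      | zero => simp [borderedDiagAddRankOne, ← hrow, hsym.apply 0 i.succ]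
      | succ j => simp [borderedDiagAddRankOne, hblk, diagonal_apply]
  obtain ⟨j, hcj, hcard⟩ := exists_ne_zero_le_card_erase_of_add_two_le_rank (n := 4)
    (hA ▸ hrank) (i₀ := ⟨0, hm⟩) (by exact_mod_cast hc1)
  obtain ⟨b, hb, rfl, hbd⟩ := exists_injective_cons_mem hcard
  have hd : ∀ k : Fin 4, d (b k.succ) ≠ 0 := fun k => by simpa using hbd k
  exact ⟨b, hb, mul_ne_zero (mul_ne_zero (mul_ne_zero (mul_ne_zero hcj (hd 0)) (hd 1)) (hd 2))
    (hd 3)⟩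
end

section
/- Let c₁, c₂, c₃, d₁, d₂, d₃ ∈ ℚ with c₁ ≠ 0 and d₂·d₃ ≠ 0. Then the number of integer tuples (y₁, y₂, y₃, y₁', y₂', y₃') with all coordinates in [1, X] satisfying the system d₁y₁y₁' + d₂y₂y₂' + d₃y₃y₃' = 0 and c₁y₁ + c₂y₂ + c₃y₃ = 0 is O(X³ log X). -/
open Finset

lemma sum_inv_Icc_le (n : ℕ) : ∑ g ∈ Finset.Icc (1:ℤ) (n:ℤ), (1:ℝ)/(g:ℝ) ≤ 1 + Real.log n := by
  have h1 : ∑ g ∈ Finset.Icc (1:ℤ) (n:ℤ), (1:ℝ)/(g:ℝ) = ∑ g ∈ Finset.Icc 1 n, (1:ℝ)/(g:ℝ) := by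
    refine Finset.sum_nbij' (i := fun g => g.toNat) (j := fun g => (g:ℤ)) ?_ ?_ ?_ ?_ ?_
    · intro a ha; simp only [Finset.mem_Icc] at *; omega
    · intro a ha; simp only [Finset.mem_Icc] at *; omega
    · intro a ha; simp only [Finset.mem_Icc] at ha; simp; omega
    · intro a ha; simp
    · intro a ha; simp only [Finset.mem_Icc] at ha
      have h2 : ((a.toNat:ℕ):ℝ) = (a:ℝ) := by exact_mod_cast Int.toNat_of_nonneg (by omega)
      simp [h2]
  rw [h1]
  calc ∑ g ∈ Finset.Icc 1 n, (1:ℝ)/(g:ℝ) = ((harmonic n : ℚ) : ℝ) := by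
        rw [harmonic_eq_sum_Icc]; push_cast; simp [one_div]
    _ ≤ 1 + Real.log n := harmonic_le_one_add_log n

lemma inner_ite_le {M a : ℤ} (ha : 1 ≤ a) :
    ∑ b ∈ Finset.Icc (1:ℤ) M, (if b ≤ a then 1/(a:ℝ) else 0) ≤ 1 := by
  rw [← Finset.sum_filter]
  rw [Finset.sum_const, nsmul_eq_mul]
  have hcard : ((Finset.Icc (1:ℤ) M).filter (fun b => b ≤ a)).card ≤ (Finset.Icc (1:ℤ) a).card := by
    apply Finset.card_le_card
    intro b hb
    simp only [Finset.mem_filter, Finset.mem_Icc] at *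
    omega
  have h2 : (Finset.Icc (1:ℤ) a).card = a.toNat := by
    rw [Int.card_Icc]; omega
  have ha' : (0:ℝ) < (a:ℝ) := by exact_mod_cast lt_of_lt_of_le zero_lt_one ha
  calc (((Finset.Icc (1:ℤ) M).filter (fun b => b ≤ a)).card : ℝ) * (1/(a:ℝ))
      ≤ (a:ℝ) * (1/(a:ℝ)) := by
        apply mul_le_mul_of_nonneg_right _ (by positivity)
        have : (((Finset.Icc (1:ℤ) M).filter (fun b => b ≤ a)).card : ℝ) ≤ (a.toNat : ℝ) := by
          exact_mod_cast le_trans hcard (le_of_eq h2)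
        calc (((Finset.Icc (1:ℤ) M).filter (fun b => b ≤ a)).card : ℝ) ≤ (a.toNat:ℝ) := this
          _ = (a:ℝ) := by exact_mod_cast Int.toNat_of_nonneg (by omega)
    _ = 1 := by field_simp

lemma sum_inv_max_le {M : ℤ} (hM : 0 ≤ M) :
    ∑ p ∈ Finset.Icc (1:ℤ) M ×ˢ Finset.Icc (1:ℤ) M, (1:ℝ)/((max p.1 p.2 : ℤ):ℝ) ≤ 2*M := by
  have key : ∀ p ∈ Finset.Icc (1:ℤ) M ×ˢ Finset.Icc (1:ℤ) M,
      (1:ℝ)/((max p.1 p.2 : ℤ):ℝ) ≤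
        (if p.2 ≤ p.1 then 1/(p.1:ℝ) else 0) + (if p.1 ≤ p.2 then 1/(p.2:ℝ) else 0) := by
    rintro ⟨a,b⟩ hp
    simp only [Finset.mem_product, Finset.mem_Icc] at hp
    dsimp only
    have hb1 : (1:ℝ) ≤ (b:ℝ) := by exact_mod_cast hp.2.1
    have ha1 : (1:ℝ) ≤ (a:ℝ) := by exact_mod_cast hp.1.1
    rcases le_total b a with h | h
    · rw [max_eq_left h, if_pos h]
      have h0 : (0:ℝ) ≤ (if a ≤ b then 1/(b:ℝ) else 0) := by
        split_ifs
        · positivity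
        · exact le_refl _
      push_cast
      linarith
    · rw [max_eq_right h, if_pos h]
      have h0 : (0:ℝ) ≤ (if b ≤ a then 1/(a:ℝ) else 0) := by
        split_ifs
        · positivity
        · exact le_refl _
      push_cast
      linarith
  calc ∑ p ∈ Finset.Icc (1:ℤ) M ×ˢ Finset.Icc (1:ℤ) M, (1:ℝ)/((max p.1 p.2 : ℤ):ℝ)
      ≤ ∑ p ∈ Finset.Icc (1:ℤ) M ×ˢ Finset.Icc (1:ℤ) M,
        ((if p.2 ≤ p.1 then 1/(p.1:ℝ) else 0) + (if p.1 ≤ p.2 then 1/(p.2:ℝ) else 0)) :=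
        Finset.sum_le_sum key
    _ = (∑ p ∈ Finset.Icc (1:ℤ) M ×ˢ Finset.Icc (1:ℤ) M, (if p.2 ≤ p.1 then 1/(p.1:ℝ) else 0))
        + ∑ p ∈ Finset.Icc (1:ℤ) M ×ˢ Finset.Icc (1:ℤ) M, (if p.1 ≤ p.2 then 1/(p.2:ℝ) else 0) :=
        Finset.sum_add_distrib
    _ ≤ (M:ℝ) + (M:ℝ) := by
        have hMc : ((Finset.Icc (1:ℤ) M).card : ℝ) ≤ (M:ℝ) := by
          rw [Int.card_Icc]
          have : ((M + 1 - 1).toNat : ℤ) ≤ M := by omega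
          exact_mod_cast this
        apply add_le_add
        · rw [Finset.sum_product]
          calc ∑ a ∈ Finset.Icc (1:ℤ) M, ∑ b ∈ Finset.Icc (1:ℤ) M, (if b ≤ a then 1/(a:ℝ) else 0)
              ≤ ∑ a ∈ Finset.Icc (1:ℤ) M, 1 := by
                apply Finset.sum_le_sum
                intro a ha
                simp only [Finset.mem_Icc] at ha
                exact inner_ite_le ha.1
            _ ≤ (M:ℝ) := by rw [Finset.sum_const, nsmul_eq_mul, mul_one]; exact hMc
        · rw [Finset.sum_product, Finset.sum_comm]
          calc ∑ b ∈ Finset.Icc (1:ℤ) M, ∑ a ∈ Finset.Icc (1:ℤ) M, (if a ≤ b then 1/(b:ℝ) else 0)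
              ≤ ∑ b ∈ Finset.Icc (1:ℤ) M, 1 := by
                apply Finset.sum_le_sum
                intro b hb
                simp only [Finset.mem_Icc] at hb
                exact inner_ite_le hb.1
            _ ≤ (M:ℝ) := by rw [Finset.sum_const, nsmul_eq_mul, mul_one]; exact hMc
    _ = 2*M := by ring

lemma sum_gcd_max_le (n : ℕ)
    (hharm : ∑ g ∈ Finset.Icc (1:ℤ) (n:ℤ), (1:ℝ)/(g:ℝ) ≤ 1 + Real.log n)
    (hmax : ∀ M : ℤ, 0 ≤ M →
      ∑ p ∈ Finset.Icc (1:ℤ) M ×ˢ Finset.Icc (1:ℤ) M, (1:ℝ)/((max p.1 p.2 : ℤ):ℝ) ≤ 2*M) :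
    ∑ p ∈ Finset.Icc (1:ℤ) (n:ℤ) ×ˢ Finset.Icc (1:ℤ) (n:ℤ),
      ((Int.gcd p.1 p.2 : ℝ)/((max p.1 p.2 : ℤ):ℝ))
      ≤ 2*n*(1 + Real.log n) := by
  classical
  set P := Finset.Icc (1:ℤ) (n:ℤ) ×ˢ Finset.Icc (1:ℤ) (n:ℤ) with hP
  set G : Finset ((_:ℤ) × ℤ × ℤ) :=
    (Finset.Icc (1:ℤ) (n:ℤ)).sigma
      (fun g => Finset.Icc (1:ℤ) ((n:ℤ)/g) ×ˢ Finset.Icc (1:ℤ) ((n:ℤ)/g)) with hG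
  set F : ((_:ℤ) × ℤ × ℤ) → ℝ := fun q => 1/((max q.2.1 q.2.2 : ℤ):ℝ) with hF
  set ι : ℤ×ℤ → ((_:ℤ) × ℤ × ℤ) :=
    fun p => ⟨(Int.gcd p.1 p.2 : ℤ), (p.1 / (Int.gcd p.1 p.2 : ℤ), p.2 / (Int.gcd p.1 p.2 : ℤ))⟩ with hι
  -- basic facts about members of P
  have hmem : ∀ p ∈ P, (1:ℤ) ≤ p.1 ∧ p.1 ≤ n ∧ (1:ℤ) ≤ p.2 ∧ p.2 ≤ n := by
    rintro ⟨a,b⟩ hp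
    simp only [hP, Finset.mem_product, Finset.mem_Icc] at hp
    exact ⟨hp.1.1, hp.1.2, hp.2.1, hp.2.2⟩
  have hgpos : ∀ p ∈ P, (0:ℤ) < (Int.gcd p.1 p.2 : ℤ) := by
    intro p hp
    have h := hmem p hp
    have : p.1 ≠ 0 := by omega
    exact_mod_cast Int.gcd_pos_of_ne_zero_left p.2 this
  -- step 1 : termwise equality
  have hterm : ∀ p ∈ P, (Int.gcd p.1 p.2 : ℝ)/((max p.1 p.2 : ℤ):ℝ) = F (ι p) := by
    rintro ⟨a,b⟩ hp
    have h := hmem _ hp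
    have hg := hgpos _ hp
    set g : ℤ := (Int.gcd a b : ℤ) with hgdef
    have hga : g ∣ a := Int.gcd_dvd_left a b
    have hgb : g ∣ b := Int.gcd_dvd_right a b
    have hmax' : max a b = g * max (a/g) (b/g) := by
      rw [mul_max_of_nonneg _ _ (le_of_lt hg)]
      rw [Int.mul_ediv_cancel' hga, Int.mul_ediv_cancel' hgb]
    have hmaxpos : (0:ℤ) < max (a/g) (b/g) := by
      have : (1:ℤ) ≤ a/g := by
        rw [Int.le_ediv_iff_mul_le hg]
        have : g ≤ a := Int.le_of_dvd (by omega) hga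
        omega
      exact lt_of_lt_of_le zero_lt_one (le_trans this (le_max_left _ _))
    have hgR : (0:ℝ) < (g:ℝ) := by exact_mod_cast hg
    have hgr : ((Int.gcd a b : ℕ):ℝ) = (g:ℝ) := by rw [hgdef]; push_cast; ring
    simp only [hF, hι]
    rw [hmax']
    have h1 : ((g * (a/g ⊔ b/g) : ℤ):ℝ) = (g:ℝ) * ((a/g ⊔ b/g : ℤ):ℝ) := by push_cast; ring
    rw [h1, hgr, ← div_div, div_self hgR.ne']
  -- injectivity
  have hinj : ∀ x ∈ P, ∀ y ∈ P, ι x = ι y → x = y := by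
    rintro ⟨a,b⟩ hx ⟨a',b'⟩ hy h
    simp only [hι, Sigma.mk.inj_iff, heq_iff_eq, Prod.mk.injEq] at h
    obtain ⟨h1, h2, h3⟩ := h
    have hga : ((Int.gcd a b : ℤ)) ∣ a := Int.gcd_dvd_left a b
    have hgb : ((Int.gcd a b : ℤ)) ∣ b := Int.gcd_dvd_right a b
    have hga' : ((Int.gcd a' b' : ℤ)) ∣ a' := Int.gcd_dvd_left a' b'
    have hgb' : ((Int.gcd a' b' : ℤ)) ∣ b' := Int.gcd_dvd_right a' b'
    have e1 : a = a' := by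
      rw [← Int.ediv_mul_cancel hga, ← Int.ediv_mul_cancel hga', h2, h1]
    have e2 : b = b' := by
      rw [← Int.ediv_mul_cancel hgb, ← Int.ediv_mul_cancel hgb', h3, h1]
    simp [e1, e2]
  -- image inside G
  have himage : P.image ι ⊆ G := by
    intro y hy
    obtain ⟨p, hp, rfl⟩ := Finset.mem_image.mp hy
    obtain ⟨a, b⟩ := p
    have h := hmem _ hp
    have hg := hgpos _ hp
    simp only at h hg
    have hga : ((Int.gcd a b : ℤ)) ∣ a := Int.gcd_dvd_left a b
    have hgb : ((Int.gcd a b : ℤ)) ∣ b := Int.gcd_dvd_right a b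
    simp only [hG, hι, Finset.mem_sigma, Finset.mem_product, Finset.mem_Icc]
    refine ⟨⟨?_, ?_⟩, ⟨?_, ?_⟩, ⟨?_, ?_⟩⟩
    · omega
    · exact le_trans (Int.le_of_dvd (by omega) hga) h.2.1
    · rw [Int.le_ediv_iff_mul_le hg]
      have := Int.le_of_dvd (by omega) hga
      omega
    · exact Int.ediv_le_ediv hg h.2.1
    · rw [Int.le_ediv_iff_mul_le hg]
      have := Int.le_of_dvd (by omega) hgb
      omega
    · exact Int.ediv_le_ediv hg h.2.2.2
  -- nonnegativity of F on G
  have hnonneg : ∀ y ∈ G, y ∉ P.image ι → 0 ≤ F y := by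
    intro y hy _
    simp only [hG, Finset.mem_sigma, Finset.mem_product, Finset.mem_Icc] at hy
    have h1 : (1:ℤ) ≤ max y.2.1 y.2.2 := le_trans hy.2.1.1 (le_max_left _ _)
    simp only [hF]
    have : (0:ℝ) < ((max y.2.1 y.2.2 : ℤ):ℝ) := by exact_mod_cast lt_of_lt_of_le zero_lt_one h1
    positivity
  calc ∑ p ∈ P, ((Int.gcd p.1 p.2 : ℝ)/((max p.1 p.2 : ℤ):ℝ))
      = ∑ p ∈ P, F (ι p) := Finset.sum_congr rfl hterm
    _ = ∑ y ∈ P.image ι, F y := (Finset.sum_image hinj).symm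
    _ ≤ ∑ y ∈ G, F y := Finset.sum_le_sum_of_subset_of_nonneg himage hnonneg
    _ = ∑ g ∈ Finset.Icc (1:ℤ) (n:ℤ), ∑ p ∈ Finset.Icc (1:ℤ) ((n:ℤ)/g) ×ˢ Finset.Icc (1:ℤ) ((n:ℤ)/g),
          (1:ℝ)/((max p.1 p.2 : ℤ):ℝ) := by
        rw [hG, Finset.sum_sigma]
    _ ≤ ∑ g ∈ Finset.Icc (1:ℤ) (n:ℤ), 2*(((n:ℤ)/g : ℤ):ℝ) := by
        apply Finset.sum_le_sum
        intro g hg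
        simp only [Finset.mem_Icc] at hg
        exact hmax _ (Int.ediv_nonneg (by positivity) (by omega))
    _ ≤ ∑ g ∈ Finset.Icc (1:ℤ) (n:ℤ), (2*(n:ℝ)) * (1/(g:ℝ)) := by
        apply Finset.sum_le_sum
        intro g hg
        simp only [Finset.mem_Icc] at hg
        have hg0 : (0:ℝ) < (g:ℝ) := by exact_mod_cast lt_of_lt_of_le zero_lt_one hg.1
        have key : (((n:ℤ)/g : ℤ):ℝ) ≤ (n:ℝ)/(g:ℝ) := by
          rw [le_div_iff₀ hg0]
          exact_mod_cast Int.ediv_mul_le (n:ℤ) (by omega)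
        calc 2*(((n:ℤ)/g : ℤ):ℝ) ≤ 2*((n:ℝ)/(g:ℝ)) := by linarith
          _ = (2*(n:ℝ)) * (1/(g:ℝ)) := by ring
    _ = (2*(n:ℝ)) * ∑ g ∈ Finset.Icc (1:ℤ) (n:ℤ), (1:ℝ)/(g:ℝ) := by rw [Finset.mul_sum]
    _ ≤ (2*(n:ℝ)) * (1 + Real.log n) := by
        apply mul_le_mul_of_nonneg_left hharm (by positivity)
    _ = 2*n*(1 + Real.log n) := by ring

lemma fib_card_le {a b m : ℤ} (ha : 1 ≤ a) (hb : 1 ≤ b) (hm : 0 ≤ m) :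
    ((((Finset.Icc (-m) m).filter (fun A => b ∣ a*A ∧ a*|A| ≤ b*m)).card : ℝ))
      ≤ 2*(Int.gcd a b : ℝ)*(m:ℝ)/((max a b : ℤ):ℝ) + 1 := by
  classical
  set g : ℤ := (Int.gcd a b : ℤ) with hgdef
  have hgnat : 0 < Int.gcd a b := Int.gcd_pos_of_ne_zero_left b (by omega)
  have hg : 0 < g := by rw [hgdef]; exact_mod_cast hgnat
  have hga : g ∣ a := Int.gcd_dvd_left a b
  have hgb : g ∣ b := Int.gcd_dvd_right a b
  set b₁ : ℤ := b / g with hb1def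
  have hbb1 : b = g * b₁ := (Int.mul_ediv_cancel' hgb).symm
  have hb1pos : 0 < b₁ := by nlinarith [hbb1]
  have hcop : Int.gcd b₁ (a / g) = 1 := by
    rw [hb1def, hgdef, Int.gcd_comm]
    exact Int.gcd_div_gcd_div_gcd hgnat
  set K : ℤ := min ((g*m)/a) ((g*m)/b) with hKdef
  have hK0 : 0 ≤ K := by
    apply le_min <;> exact Int.ediv_nonneg (by positivity) (by omega)
  have hdvdall : ∀ A : ℤ, b ∣ a*A → b₁ ∣ A := by
    intro A hdvd
    have h1 : g * b₁ ∣ g * ((a/g) * A) := by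
      rw [← hbb1]
      have : g * ((a/g) * A) = a * A := by
        rw [← mul_assoc, Int.mul_ediv_cancel' hga]
      rw [this]; exact hdvd
    have h2 : b₁ ∣ (a/g) * A := (mul_dvd_mul_iff_left hg.ne').mp h1
    exact Int.dvd_of_dvd_mul_right_of_gcd_one h2 hcop
  -- injection A ↦ A / b₁ into Icc (-K) K
  have hcard : (((Finset.Icc (-m) m).filter (fun A => b ∣ a*A ∧ a*|A| ≤ b*m)).card)
      ≤ (Finset.Icc (-K) K).card := by
    apply Finset.card_le_card_of_injOn (fun A => A / b₁)
    · intro A hA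
      simp only [Finset.mem_coe, Finset.mem_filter, Finset.mem_Icc] at hA
      obtain ⟨⟨hA1, hA2⟩, hdvd, habs⟩ := hA
      have hb1A : b₁ ∣ A := hdvdall A hdvd
      set t : ℤ := A / b₁ with htdef
      have hAt : A = b₁ * t := (Int.mul_ediv_cancel' hb1A).symm
      have habs_t : |A| = b₁ * |t| := by
        rw [hAt, abs_mul, abs_of_pos hb1pos]
      -- |t| ≤ (g*m)/b
      have h1 : |t| ≤ (g*m)/b := by
        rw [Int.le_ediv_iff_mul_le (by omega)]
        have hAm : |A| ≤ m := abs_le.mpr ⟨hA1, hA2⟩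
        calc |t| * b = g * (b₁ * |t|) := by rw [hbb1]; ring
          _ = g * |A| := by rw [habs_t]
          _ ≤ g * m := by nlinarith
      -- |t| ≤ (g*m)/a
      have h2 : |t| ≤ (g*m)/a := by
        rw [Int.le_ediv_iff_mul_le (by omega)]
        have : a * |A| = b₁ * (a * |t|) := by rw [habs_t]; ring
        have hb' : a * |A| ≤ g * b₁ * m := by rw [← hbb1]; exact habs
        nlinarith
      have : |t| ≤ K := le_min h2 h1
      simp only [Finset.mem_coe, Finset.mem_Icc]
      exact abs_le.mp this
    · intro A hA A' hA' hEq
      simp only [Finset.mem_coe, Finset.mem_filter, Finset.mem_Icc] at hA hA'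
      have d1 : b₁ ∣ A := hdvdall A hA.2.1
      have d2 : b₁ ∣ A' := hdvdall A' hA'.2.1
      calc A = b₁ * (A / b₁) := (Int.mul_ediv_cancel' d1).symm
        _ = b₁ * (A' / b₁) := by dsimp only at hEq; rw [hEq]
        _ = A' := Int.mul_ediv_cancel' d2
  -- conclude
  have hIccK : ((Finset.Icc (-K) K).card : ℝ) ≤ 2*(K:ℝ) + 1 := by
    rw [Int.card_Icc]
    have h1 : ((K + 1 - -K).toNat : ℤ) = 2*K + 1 := by omega
    exact_mod_cast le_of_eq h1
  have hmaxpos : (0:ℤ) < max a b := lt_of_lt_of_le zero_lt_one (le_trans ha (le_max_left _ _))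
  have hmaxR : (0:ℝ) < ((max a b : ℤ):ℝ) := by exact_mod_cast hmaxpos
  have hKle : (K:ℝ) ≤ (g:ℝ)*(m:ℝ)/((max a b : ℤ):ℝ) := by
    rw [le_div_iff₀ hmaxR]
    rcases max_choice a b with h | h <;> rw [h]
    · have h2 : K * a ≤ g * m := by
        have := Int.ediv_mul_le (g*m) (show a ≠ 0 by omega)
        have hKa : K ≤ (g*m)/a := min_le_left _ _
        nlinarith
      exact_mod_cast h2
    · have h2 : K * b ≤ g * m := by
        have := Int.ediv_mul_le (g*m) (show b ≠ 0 by omega)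
        have hKb : K ≤ (g*m)/b := min_le_right _ _
        nlinarith
      exact_mod_cast h2
  have hgr : ((Int.gcd a b : ℕ):ℝ) = (g:ℝ) := by rw [hgdef]; push_cast; ring
  calc ((((Finset.Icc (-m) m).filter (fun A => b ∣ a*A ∧ a*|A| ≤ b*m)).card : ℝ))
      ≤ ((Finset.Icc (-K) K).card : ℝ) := by exact_mod_cast hcard
    _ ≤ 2*(K:ℝ) + 1 := hIccK
    _ ≤ 2*((g:ℝ)*(m:ℝ)/((max a b : ℤ):ℝ)) + 1 := by linarith
    _ = 2*(Int.gcd a b : ℝ)*(m:ℝ)/((max a b : ℤ):ℝ) + 1 := by rw [hgr]; ring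

section helpers

lemma rat_num_eq (q : ℚ) : (q.num : ℚ) = q * q.den := by
  have hd : ((q.den : ℚ)) ≠ 0 := by exact_mod_cast q.den_ne_zero
  have h := Rat.num_div_den q
  rw [div_eq_iff hd] at h
  exact h

lemma exists_int_clear (c : Fin 3 → ℚ) :
    ∃ (C : Fin 3 → ℤ) (N : ℤ), 0 < N ∧ ∀ i, (C i : ℚ) = (N:ℚ) * c i := by
  refine ⟨![(c 0).num * (c 1).den * (c 2).den, (c 0).den * (c 1).num * (c 2).den,
      (c 0).den * (c 1).den * (c 2).num], ((c 0).den : ℤ) * (c 1).den * (c 2).den,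
      by positivity, ?_⟩
  intro i
  fin_cases i
  · show (((c 0).num * (c 1).den * (c 2).den : ℤ) : ℚ) = _
    push_cast
    rw [rat_num_eq]; ring
  · show ((((c 0).den : ℤ) * (c 1).num * (c 2).den : ℤ) : ℚ) = _
    push_cast
    rw [rat_num_eq]; ring
  · show ((((c 0).den : ℤ) * (c 1).den * (c 2).num : ℤ) : ℚ) = _
    push_cast
    rw [rat_num_eq]; ring

end helpers

set_option maxHeartbeats 1000000 in
/-- Estimate for 𝓘₂ in the proof of Lemma 4.3: with c₁ ≠ 0 and d₂d₃ ≠ 0,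
the number of integer tuples (y₁,y₂,y₃,y₁',y₂',y₃') ∈ [1,X]⁶ with
d₁y₁y₁' + d₂y₂y₂' + d₃y₃y₃' = 0 and c₁y₁ + c₂y₂ + c₃y₃ = 0 is O(X³ log X). -/
theorem stmt_18 (c d : Fin 3 → ℚ) (hc : c 0 ≠ 0) (hd : d 1 * d 2 ≠ 0) :
    ∃ K : ℝ, 0 < K ∧ ∀ X : ℝ, 2 ≤ X →
      (({p : (Fin 3 → ℤ) × (Fin 3 → ℤ) |
          (∀ i, 1 ≤ p.1 i ∧ (p.1 i : ℝ) ≤ X) ∧ (∀ i, 1 ≤ p.2 i ∧ (p.2 i : ℝ) ≤ X) ∧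
          (∑ i, d i * (p.1 i : ℚ) * (p.2 i : ℚ)) = 0 ∧
          (∑ i, c i * (p.1 i : ℚ)) = 0}).ncard : ℝ)
      ≤ K * X ^ 3 * Real.log X := by
  classical
  obtain ⟨C, Nc, hNc, hCi⟩ := exists_int_clear c
  obtain ⟨D, Nd, hNd, hDi⟩ := exists_int_clear d
  have hd1 : d 1 ≠ 0 := left_ne_zero_of_mul hd
  have hd2 : d 2 ≠ 0 := right_ne_zero_of_mul hd
  have hcast : ∀ (E : Fin 3 → ℤ) (N : ℤ) (e : Fin 3 → ℚ), 0 < N → (∀ i, (E i : ℚ) = (N:ℚ) * e i) →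
      ∀ i, e i ≠ 0 → E i ≠ 0 := by
    intro E N e hN hEi i hei hEz
    have h1 := hEi i
    rw [hEz] at h1
    push_cast at h1
    rcases mul_eq_zero.mp h1.symm with h | h
    · exact absurd h (by exact_mod_cast hN.ne')
    · exact hei h
  have hC0 : C 0 ≠ 0 := hcast C Nc c hNc hCi 0 hc
  have hD1 : D 1 ≠ 0 := hcast D Nd d hNd hDi 1 hd1
  have hD2 : D 2 ≠ 0 := hcast D Nd d hNd hDi 2 hd2
  set M : ℤ := |C 0 * D 1| + |D 0 * C 1| + |C 0 * D 2| + |D 0 * C 2| + 1 with hMdef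
  have hM1 : 1 ≤ M := by
    have := abs_nonneg (C 0 * D 1)
    have := abs_nonneg (D 0 * C 1)
    have := abs_nonneg (C 0 * D 2)
    have := abs_nonneg (D 0 * C 2)
    omega
  have hlog2 : 0 < Real.log 2 := Real.log_pos one_lt_two
  refine ⟨((4*M + 1 : ℤ):ℝ) * (1/Real.log 2 + 1), by positivity, ?_⟩
  intro X hX
  set n : ℕ := ⌊X⌋₊ with hndef
  have hn2 : 2 ≤ n := Nat.le_floor (by exact_mod_cast hX)
  have hnX : (n:ℝ) ≤ X := Nat.floor_le (by linarith)
  have hfl : ((n:ℕ):ℤ) = ⌊X⌋ := Int.natCast_floor_eq_floor (by linarith)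
  have hcoord : ∀ k : ℤ, (k:ℝ) ≤ X → k ≤ (n:ℤ) := by
    intro k hk
    rw [hfl]
    exact Int.le_floor.mpr hk
  set m : ℤ := M * n with hmdef
  have hm0 : 0 ≤ m := by positivity
  -- the finsets
  set P : Finset (ℤ×ℤ) := Finset.Icc (1:ℤ) (n:ℤ) ×ˢ Finset.Icc (1:ℤ) (n:ℤ) with hPdef
  set T₄ : Finset (ℤ×ℤ×ℤ×ℤ) :=
    ((Finset.Icc (1:ℤ) (n:ℤ)) ×ˢ (Finset.Icc (1:ℤ) (n:ℤ)) ×ˢ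
      (Finset.Icc (-m) m) ×ˢ (Finset.Icc (-m) m)).filter
      (fun q => q.1 * q.2.2.1 + q.2.1 * q.2.2.2 = 0) with hT4def
  set T : Finset (ℤ × (ℤ×ℤ×ℤ×ℤ)) := (Finset.Icc (1:ℤ) (n:ℤ)) ×ˢ T₄ with hTdef
  set S : Set ((Fin 3 → ℤ) × (Fin 3 → ℤ)) :=
    {p : (Fin 3 → ℤ) × (Fin 3 → ℤ) |
          (∀ i, 1 ≤ p.1 i ∧ (p.1 i : ℝ) ≤ X) ∧ (∀ i, 1 ≤ p.2 i ∧ (p.2 i : ℝ) ≤ X) ∧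
          (∑ i, d i * (p.1 i : ℚ) * (p.2 i : ℚ)) = 0 ∧
          (∑ i, c i * (p.1 i : ℚ)) = 0} with hSdef
  set Af : ((Fin 3 → ℤ) × (Fin 3 → ℤ)) → ℤ := fun p => C 0 * D 1 * p.2 1 - D 0 * C 1 * p.2 0 with hAf
  set Bf : ((Fin 3 → ℤ) × (Fin 3 → ℤ)) → ℤ := fun p => C 0 * D 2 * p.2 2 - D 0 * C 2 * p.2 0 with hBf
  -- integer equations for members of S
  have hS_eqs : ∀ p ∈ S, (C 0 * p.1 0 + C 1 * p.1 1 + C 2 * p.1 2 = 0) ∧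
      (D 0 * p.1 0 * p.2 0 + D 1 * p.1 1 * p.2 1 + D 2 * p.1 2 * p.2 2 = 0) := by
    intro p hp
    obtain ⟨h1, h2, hbilQ, hlinQ⟩ := hp
    rw [Fin.sum_univ_three] at hbilQ hlinQ
    constructor
    · have key : ((C 0 * p.1 0 + C 1 * p.1 1 + C 2 * p.1 2 : ℤ) : ℚ)
          = (Nc:ℚ) * (c 0 * p.1 0 + c 1 * p.1 1 + c 2 * p.1 2) := by
        push_cast
        rw [hCi 0, hCi 1, hCi 2]; ring
      rw [hlinQ, mul_zero] at key
      exact_mod_cast key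
    · have key : ((D 0 * p.1 0 * p.2 0 + D 1 * p.1 1 * p.2 1 + D 2 * p.1 2 * p.2 2 : ℤ) : ℚ)
          = (Nd:ℚ) * (d 0 * p.1 0 * p.2 0 + d 1 * p.1 1 * p.2 1 + d 2 * p.1 2 * p.2 2) := by
        push_cast
        rw [hDi 0, hDi 1, hDi 2]; ring
      rw [hbilQ, mul_zero] at key
      exact_mod_cast key
  -- the key bilinear relation
  have hS_key : ∀ p ∈ S, p.1 1 * Af p + p.1 2 * Bf p = 0 := by
    intro p hp
    obtain ⟨hlin, hbil⟩ := hS_eqs p hp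
    simp only [hAf, hBf]
    linear_combination C 0 * hbil - D 0 * p.2 0 * hlin
  -- coordinate bounds
  have hS_bd : ∀ p ∈ S, (∀ i, 1 ≤ p.1 i ∧ p.1 i ≤ (n:ℤ)) ∧ (∀ i, 1 ≤ p.2 i ∧ p.2 i ≤ (n:ℤ)) := by
    intro p hp
    obtain ⟨h1, h2, _, _⟩ := hp
    exact ⟨fun i => ⟨(h1 i).1, hcoord _ (h1 i).2⟩, fun i => ⟨(h2 i).1, hcoord _ (h2 i).2⟩⟩
  -- |Af p| ≤ m and |Bf p| ≤ m
  have hS_abs : ∀ p ∈ S, |Af p| ≤ m ∧ |Bf p| ≤ m := by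
    intro p hp
    obtain ⟨hb1, hb2⟩ := hS_bd p hp
    have habs : ∀ i, |p.2 i| ≤ (n:ℤ) := by
      intro i
      rw [abs_le]
      constructor
      · have := (hb2 i).1; omega
      · exact (hb2 i).2
    constructor
    · calc |Af p| ≤ |C 0 * D 1 * p.2 1| + |D 0 * C 1 * p.2 0| := abs_sub _ _
        _ = |C 0 * D 1| * |p.2 1| + |D 0 * C 1| * |p.2 0| := by rw [abs_mul (C 0 * D 1), abs_mul (D 0 * C 1)]
        _ ≤ |C 0 * D 1| * (n:ℤ) + |D 0 * C 1| * (n:ℤ) := by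
            have h1 := habs 1
            have h2 := habs 0
            have := abs_nonneg (C 0 * D 1)
            have := abs_nonneg (D 0 * C 1)
            nlinarith
        _ ≤ M * n := by
            have h0 : (0:ℤ) ≤ (n:ℤ) := by positivity
            have h3 : |C 0 * D 1| + |D 0 * C 1| ≤ M := by
              have := abs_nonneg (C 0 * D 2)
              have := abs_nonneg (D 0 * C 2)
              omega
            nlinarith
    · calc |Bf p| ≤ |C 0 * D 2 * p.2 2| + |D 0 * C 2 * p.2 0| := abs_sub _ _
        _ = |C 0 * D 2| * |p.2 2| + |D 0 * C 2| * |p.2 0| := by rw [abs_mul (C 0 * D 2), abs_mul (D 0 * C 2)]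
        _ ≤ |C 0 * D 2| * (n:ℤ) + |D 0 * C 2| * (n:ℤ) := by
            have h1 := habs 2
            have h2 := habs 0
            have := abs_nonneg (C 0 * D 2)
            have := abs_nonneg (D 0 * C 2)
            nlinarith
        _ ≤ M * n := by
            have h0 : (0:ℤ) ≤ (n:ℤ) := by positivity
            have h3 : |C 0 * D 2| + |D 0 * C 2| ≤ M := by
              have := abs_nonneg (C 0 * D 1)
              have := abs_nonneg (D 0 * C 1)
              omega
            nlinarith
  -- injection into T
  have hstep1 : S.ncard ≤ T.card := by
    have hmaps : ∀ p ∈ S, (p.2 0, (p.1 1, p.1 2, Af p, Bf p)) ∈ (↑T : Set (ℤ × (ℤ×ℤ×ℤ×ℤ))) := by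
      intro p hp
      obtain ⟨hb1, hb2⟩ := hS_bd p hp
      obtain ⟨hA, hB⟩ := hS_abs p hp
      simp only [hTdef, hT4def, Finset.coe_filter, Finset.mem_coe, Finset.mem_product,
        Finset.mem_Icc, Set.mem_setOf_eq, Finset.mem_filter]
      refine ⟨⟨(hb2 0).1, (hb2 0).2⟩, ⟨⟨(hb1 1).1, (hb1 1).2⟩, ⟨(hb1 2).1, (hb1 2).2⟩,
        abs_le.mp hA, abs_le.mp hB⟩, ?_⟩
      exact hS_key p hp
    have hinj : Set.InjOn (fun p : ((Fin 3 → ℤ) × (Fin 3 → ℤ)) =>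
        (p.2 0, (p.1 1, p.1 2, Af p, Bf p))) S := by
      intro p hp p' hp' hEq
      simp only [Prod.mk.injEq] at hEq
      obtain ⟨e0, e1, e2, eA, eB⟩ := hEq
      obtain ⟨hlin, _⟩ := hS_eqs p hp
      obtain ⟨hlin', _⟩ := hS_eqs p' hp'
      have h10 : p.1 0 = p'.1 0 := by
        have : C 0 * p.1 0 = C 0 * p'.1 0 := by
          rw [e1, e2] at hlin
          linarith [hlin, hlin']
        exact mul_left_cancel₀ hC0 this
      have h21 : p.2 1 = p'.2 1 := by
        simp only [hAf, e0] at eA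
        have : (C 0 * D 1) * p.2 1 = (C 0 * D 1) * p'.2 1 := by linarith
        exact mul_left_cancel₀ (mul_ne_zero hC0 hD1) this
      have h22 : p.2 2 = p'.2 2 := by
        simp only [hBf, e0] at eB
        have : (C 0 * D 2) * p.2 2 = (C 0 * D 2) * p'.2 2 := by linarith
        exact mul_left_cancel₀ (mul_ne_zero hC0 hD2) this
      refine Prod.ext ?_ ?_
      · funext i; fin_cases i
        · exact h10
        · exact e1
        · exact e2
      · funext i; fin_cases i
        · exact e0
        · exact h21
        · exact h22
    calc S.ncard ≤ (↑T : Set (ℤ × (ℤ×ℤ×ℤ×ℤ))).ncard :=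
          Set.ncard_le_ncard_of_injOn _ hmaps hinj (Finset.finite_toSet T)
      _ = T.card := Set.ncard_coe_finset T
    -- counting T
  have hIccn : (Finset.Icc (1:ℤ) (n:ℤ)).card = n := by
    rw [Int.card_Icc]
    omega
  have hcardT : T.card = n * T₄.card := by
    rw [hTdef, Finset.card_product, hIccn]
  -- the fiber finsets
  set Fib : ℤ → ℤ → Finset ℤ :=
    fun a b => (Finset.Icc (-m) m).filter (fun A => b ∣ a*A ∧ a*|A| ≤ b*m) with hFibdef
  have hsig : T₄.card ≤ ∑ ab ∈ P, (Fib ab.1 ab.2).card := by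
    rw [← Finset.card_sigma]
    apply Finset.card_le_card_of_injOn (fun q => ⟨(q.1, q.2.1), q.2.2.1⟩)
    · rintro ⟨a, b, A, B⟩ hq
      simp only [Finset.mem_coe, hT4def, Finset.mem_filter, Finset.mem_product, Finset.mem_Icc] at hq
      obtain ⟨⟨ha, hb, hA, hB⟩, heq⟩ := hq
      simp only [Finset.mem_coe, Finset.mem_sigma, hPdef, hFibdef, Finset.mem_product, Finset.mem_Icc,
        Finset.mem_filter]
      refine ⟨⟨ha, hb⟩, ⟨hA.1, hA.2⟩, ⟨-B, by linarith⟩, ?_⟩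
      have h1 : a * A = b * (-B) := by linarith
      have hbpos : (0:ℤ) < b := by omega
      have hapos : (0:ℤ) < a := by omega
      calc a * |A| = |a| * |A| := by rw [abs_of_pos hapos]
        _ = |a * A| := (abs_mul a A).symm
        _ = |b * (-B)| := by rw [h1]
        _ = |b| * |(-B)| := abs_mul b (-B)
        _ = b * |B| := by rw [abs_of_pos hbpos, abs_neg]
        _ ≤ b * m := by
            have : |B| ≤ m := abs_le.mpr ⟨hB.1, hB.2⟩
            nlinarith
    · rintro ⟨a, b, A, B⟩ hq ⟨a', b', A', B'⟩ hq' hEq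
      simp only [Finset.mem_coe, hT4def, Finset.mem_filter, Finset.mem_product,
        Finset.mem_Icc] at hq hq'
      obtain ⟨⟨ha, hb, hA, hB⟩, heq⟩ := hq
      obtain ⟨⟨ha', hb', hA', hB'⟩, heq'⟩ := hq'
      simp only [Sigma.mk.inj_iff, Prod.mk.injEq, heq_iff_eq] at hEq
      obtain ⟨⟨e1, e2⟩, e3⟩ := hEq
      have hBe : B = B' := by
        have hbne : b ≠ 0 := by omega
        have : b * B = b * B' := by
          rw [e2] at heq ⊢
          rw [e1, e3] at heq
          linarith
        exact mul_left_cancel₀ hbne this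
      simp only [Prod.mk.injEq]
      exact ⟨e1, e2, e3, hBe⟩
  have hPmem : ∀ ab ∈ P, (1:ℤ) ≤ ab.1 ∧ (1:ℤ) ≤ ab.2 := by
    rintro ⟨a, b⟩ hab
    simp only [hPdef, Finset.mem_product, Finset.mem_Icc] at hab
    exact ⟨hab.1.1, hab.2.1⟩
  have hPcard : P.card = n * n := by
    rw [hPdef, Finset.card_product, hIccn]
  -- real-valued bound on T₄.card
  have hT4R : (T₄.card : ℝ) ≤ 2*(m:ℝ)*(2*(n:ℝ)*(1 + Real.log n)) + (n:ℝ)*(n:ℝ) := by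
    have step1 : (T₄.card : ℝ) ≤ ∑ ab ∈ P, ((Fib ab.1 ab.2).card : ℝ) := by
      have := hsig
      push_cast
      exact_mod_cast this
    have step2 : ∑ ab ∈ P, ((Fib ab.1 ab.2).card : ℝ)
        ≤ ∑ ab ∈ P, (2*(m:ℝ) * ((Int.gcd ab.1 ab.2 : ℝ)/((max ab.1 ab.2 : ℤ):ℝ)) + 1) := by
      apply Finset.sum_le_sum
      intro ab hab
      obtain ⟨h1, h2⟩ := hPmem ab hab
      have := fib_card_le (m := m) h1 h2 hm0
      calc ((Fib ab.1 ab.2).card : ℝ)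
          ≤ 2*(Int.gcd ab.1 ab.2 : ℝ)*(m:ℝ)/((max ab.1 ab.2 : ℤ):ℝ) + 1 := this
        _ = 2*(m:ℝ) * ((Int.gcd ab.1 ab.2 : ℝ)/((max ab.1 ab.2 : ℤ):ℝ)) + 1 := by ring
    have step3 : ∑ ab ∈ P, (2*(m:ℝ) * ((Int.gcd ab.1 ab.2 : ℝ)/((max ab.1 ab.2 : ℤ):ℝ)) + 1)
        = 2*(m:ℝ) * (∑ ab ∈ P, ((Int.gcd ab.1 ab.2 : ℝ)/((max ab.1 ab.2 : ℤ):ℝ))) + (n:ℝ)*(n:ℝ) := by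
      rw [Finset.sum_add_distrib, ← Finset.mul_sum, Finset.sum_const, hPcard]
      push_cast
      ring
    have step4 : ∑ ab ∈ P, ((Int.gcd ab.1 ab.2 : ℝ)/((max ab.1 ab.2 : ℤ):ℝ))
        ≤ 2*(n:ℝ)*(1 + Real.log n) := by
      rw [hPdef]
      exact sum_gcd_max_le n (sum_inv_Icc_le n) (fun M hM => sum_inv_max_le hM)
    have hm0R : (0:ℝ) ≤ 2*(m:ℝ) := by
      have : (0:ℤ) ≤ m := hm0
      have : (0:ℝ) ≤ (m:ℝ) := by exact_mod_cast this
      linarith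
    calc (T₄.card : ℝ) ≤ ∑ ab ∈ P, ((Fib ab.1 ab.2).card : ℝ) := step1
      _ ≤ ∑ ab ∈ P, (2*(m:ℝ) * ((Int.gcd ab.1 ab.2 : ℝ)/((max ab.1 ab.2 : ℤ):ℝ)) + 1) := step2
      _ = 2*(m:ℝ) * (∑ ab ∈ P, ((Int.gcd ab.1 ab.2 : ℝ)/((max ab.1 ab.2 : ℤ):ℝ))) + (n:ℝ)*(n:ℝ) := step3
      _ ≤ 2*(m:ℝ) * (2*(n:ℝ)*(1 + Real.log n)) + (n:ℝ)*(n:ℝ) := by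
          have := mul_le_mul_of_nonneg_left step4 hm0R
          linarith
  -- final assembly
  have hlogn0 : 0 ≤ Real.log n := Real.log_nonneg (by exact_mod_cast Nat.one_le_of_lt hn2)
  have hlognX : Real.log n ≤ Real.log X := Real.log_le_log (by positivity) hnX
  have hlogX0 : 0 ≤ Real.log X := le_trans hlogn0 hlognX
  have hn0R : (0:ℝ) ≤ (n:ℝ) := by positivity
  have hmR : (m:ℝ) = (M:ℝ) * (n:ℝ) := by rw [hmdef, Int.cast_mul, Int.cast_natCast]
  have hMR1 : (1:ℝ) ≤ (M:ℝ) := by exact_mod_cast hM1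
  have hfinal1 : (S.ncard : ℝ) ≤ (n:ℝ) * ((T₄.card : ℝ)) := by
    have h1 : (S.ncard : ℝ) ≤ (T.card : ℝ) := by exact_mod_cast hstep1
    rw [hcardT] at h1
    push_cast at h1
    exact h1
  have hfinal2 : (S.ncard : ℝ) ≤ 4*(M:ℝ)*(n:ℝ)^3*(1 + Real.log n) + (n:ℝ)^3 := by
    have h2 : (n:ℝ) * (T₄.card : ℝ) ≤ (n:ℝ) * (2*(m:ℝ)*(2*(n:ℝ)*(1 + Real.log n)) + (n:ℝ)*(n:ℝ)) :=
      mul_le_mul_of_nonneg_left hT4R hn0R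
    have h3 : (n:ℝ) * (2*(m:ℝ)*(2*(n:ℝ)*(1 + Real.log n)) + (n:ℝ)*(n:ℝ))
        = 4*(M:ℝ)*(n:ℝ)^3*(1 + Real.log n) + (n:ℝ)^3 := by
      rw [hmR]; ring
    linarith [hfinal1]
  have hcastM : ((4*M+1 : ℤ):ℝ) = 4*(M:ℝ) + 1 := by push_cast; ring
  have hfinal3 : (S.ncard : ℝ) ≤ ((4*M+1 : ℤ):ℝ)*(n:ℝ)^3*(1 + Real.log n) := by
    rw [hcastM]
    have hTL : (n:ℝ)^3 ≤ (n:ℝ)^3*(1 + Real.log n) := by nlinarith [pow_nonneg hn0R 3]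
    calc (S.ncard : ℝ) ≤ 4*(M:ℝ)*(n:ℝ)^3*(1 + Real.log n) + (n:ℝ)^3 := hfinal2
      _ ≤ 4*(M:ℝ)*(n:ℝ)^3*(1 + Real.log n) + (n:ℝ)^3*(1 + Real.log n) := by
          linarith
      _ = (4*(M:ℝ) + 1)*(n:ℝ)^3*(1 + Real.log n) := by ring
  have hfinal4 : (S.ncard : ℝ) ≤ ((4*M+1 : ℤ):ℝ)*X^3*(1 + Real.log X) := by
    have hc1 : (0:ℝ) < ((4*M+1 : ℤ):ℝ) := by
      have : (0:ℤ) < 4*M+1 := by omega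
      exact_mod_cast this
    have hb1 : (n:ℝ)^3*(1 + Real.log n) ≤ X^3*(1 + Real.log X) := by
      apply mul_le_mul
      · apply pow_le_pow_left₀ hn0R hnX
      · linarith
      · linarith
      · positivity
    have h5 := mul_le_mul_of_nonneg_left hb1 hc1.le
    calc (S.ncard : ℝ) ≤ ((4*M+1 : ℤ):ℝ)*(n:ℝ)^3*(1 + Real.log n) := hfinal3
      _ = ((4*M+1 : ℤ):ℝ)*((n:ℝ)^3*(1 + Real.log n)) := by ring
      _ ≤ ((4*M+1 : ℤ):ℝ)*(X^3*(1 + Real.log X)) := h5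
      _ = ((4*M+1 : ℤ):ℝ)*X^3*(1 + Real.log X) := by ring
  have hfinal5 : ((4*M+1 : ℤ):ℝ)*X^3*(1 + Real.log X)
      ≤ (((4*M + 1 : ℤ):ℝ) * (1/Real.log 2 + 1)) * X^3 * Real.log X := by
    have hlX2 : Real.log 2 ≤ Real.log X := Real.log_le_log (by norm_num) hX
    have h1 : 1 + Real.log X ≤ (1/Real.log 2 + 1) * Real.log X := by
      have h2 : (1:ℝ) ≤ Real.log X / Real.log 2 := (one_le_div hlog2).mpr hlX2
      have h3 : Real.log X / Real.log 2 = (1/Real.log 2) * Real.log X := by ring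
      nlinarith
    have hc1 : (0:ℝ) ≤ ((4*M+1 : ℤ):ℝ) := by
      have : (0:ℤ) ≤ 4*M+1 := by omega
      exact_mod_cast this
    have hX3 : (0:ℝ) ≤ X^3 := by positivity
    calc ((4*M+1 : ℤ):ℝ)*X^3*(1 + Real.log X)
        ≤ ((4*M+1 : ℤ):ℝ)*X^3*((1/Real.log 2 + 1) * Real.log X) := by
          apply mul_le_mul_of_nonneg_left h1 (by positivity)
      _ = (((4*M + 1 : ℤ):ℝ) * (1/Real.log 2 + 1)) * X^3 * Real.log X := by ring
  calc ((S.ncard : ℕ):ℝ) ≤ ((4*M+1 : ℤ):ℝ)*X^3*(1 + Real.log X) := hfinal4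
    _ ≤ (((4*M + 1 : ℤ):ℝ) * (1/Real.log 2 + 1)) * X^3 * Real.log X := hfinal5
end
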